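/- arXiv:2206.03732 — 3 statements merged into one kernel-verified Lean document; each statement's English description precedes it below -/
import Mathlib

section
/- Let f ∈ P be a nonzero homogeneous element of degree 3 and let I = Ann(f). Then Apolar(f) satisfies the small tangent space condition if and only if the graded module I/I² has Hilbert function given by: dim_k (I/I²)_2 = C(n+1,2) − n, dim_k (I/I²)_3 = C(n+2,3) − 1, dim_k (I/I²)_4 = n, and (I/I²)_j = 0 for all j ∉ {2,3,4}. (This is the statement that the tangent space Hom_S(I, S/I) to the Hilbert scheme at I has Hilbert function n, C(n+2,3)−1, C(n+1,2)−n in degrees −1, 0, 1 and 0 elsewhere, expressed through the graded dual.) -/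
open MvPolynomial

variable {k : Type*} [Field k] {σ : Type*}

noncomputable def contract (s f : MvPolynomial σ k) : MvPolynomial σ k :=
  Finsupp.sum (AddMonoidAlgebra.coeff s) fun b cb => cb • f.divMonomial b

lemma contract_monomial (b : σ →₀ ℕ) (c : k) (f : MvPolynomial σ k) :
    contract (monomial b c) f = c • f.divMonomial b := by
  unfold contract
  rw [← single_eq_monomial, AddMonoidAlgebra.coeff_single]
  exact Finsupp.sum_single_index (by simp)

lemma contract_add_left (s t f : MvPolynomial σ k) :
    contract (s + t) f = contract s f + contract t f := by
  unfold contract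
  rw [AddMonoidAlgebra.coeff_add]
  exact Finsupp.sum_add_index' (fun b => by simp) (fun b c c' => add_smul _ _ _)

lemma contract_zero_left (f : MvPolynomial σ k) : contract 0 f = 0 := by
  unfold contract
  rw [AddMonoidAlgebra.coeff_zero]
  exact Finsupp.sum_zero_index

lemma contract_zero_right (s : MvPolynomial σ k) : contract s (0 : MvPolynomial σ k) = 0 := by
  unfold contract
  simp

lemma smul_divMonomial (c : k) (f : MvPolynomial σ k) (b : σ →₀ ℕ) :
    (c • f).divMonomial b = c • f.divMonomial b := by
  ext a
  simp [coeff_divMonomial, MvPolynomial.coeff_smul]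

lemma contract_add_right (s f g : MvPolynomial σ k) :
    contract s (f + g) = contract s f + contract s g := by
  unfold contract
  rw [← Finsupp.sum_add]
  exact Finsupp.sum_congr fun b _ => by rw [add_divMonomial, smul_add]

lemma contract_mul (s t f : MvPolynomial σ k) :
    contract (s * t) f = contract s (contract t f) := by
  induction s using MvPolynomial.induction_on' with
  | add p q hp hq => rw [add_mul, contract_add_left, contract_add_left, hp, hq]
  | monomial a c =>
    induction t using MvPolynomial.induction_on' with
    | add p q hp hq =>
      rw [mul_add, contract_add_left, contract_add_left p q, contract_add_right, hp, hq]
    | monomial b d =>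
      rw [monomial_mul, contract_monomial, contract_monomial, contract_monomial,
        smul_divMonomial, mul_smul, ← divMonomial_add, add_comm a b]

/-- The apolar (annihilator) ideal of `f` under contraction. -/
noncomputable def annIdeal (f : MvPolynomial σ k) : Ideal (MvPolynomial σ k) where
  carrier := {s | contract s f = 0}
  zero_mem' := contract_zero_left f
  add_mem' := fun hs ht => by
    simp only [Set.mem_setOf_eq] at *
    rw [contract_add_left, hs, ht, add_zero]
  smul_mem' := fun c x hx => by
    simp only [Set.mem_setOf_eq] at *
    rw [smul_eq_mul, contract_mul, hx, contract_zero_right]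

/-- The dimension of the degree-`i` graded piece of `S/I`. -/
noncomputable def hilbQ (I : Ideal (MvPolynomial σ k)) (i : ℕ) : ℕ :=
  Module.finrank k
    (↥(homogeneousSubmodule σ k i) ⧸
      ((I.restrictScalars k).comap (homogeneousSubmodule σ k i).subtype))

/-- `Apolar f` has Hilbert function `(1,n,n,1)` and `S/(Ann f)²` has the smallest
possible Hilbert function in degrees 4 and 5. -/
noncomputable def SmallTangentSpace (n : ℕ) (f : MvPolynomial σ k) : Prop :=
  hilbQ (annIdeal f) 0 = 1 ∧ hilbQ (annIdeal f) 1 = n ∧ hilbQ (annIdeal f) 2 = n ∧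
    hilbQ (annIdeal f) 3 = 1 ∧ (∀ i : ℕ, 3 < i → hilbQ (annIdeal f) i = 0) ∧
    hilbQ ((annIdeal f) ^ 2) 4 = n ∧ hilbQ ((annIdeal f) ^ 2) 5 = 0

/-- The dimension of the degree-`j` graded piece of the conormal module `I/I²`. -/
noncomputable def hilbConormal (I : Ideal (MvPolynomial σ k)) (j : ℕ) : ℕ :=
  Module.finrank k
    (↥(I.restrictScalars k ⊓ homogeneousSubmodule σ k j) ⧸
      (((I ^ 2).restrictScalars k).comap
        (I.restrictScalars k ⊓ homogeneousSubmodule σ k j).subtype))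


/-!
Write `I = Ann f` and `S_i` for the forms of degree `i`. Since `f ≠ 0` is a cubic, `I₀ = 0` and
`I_i = S_i` for `i > 3`. Degreewise, `dim (I/I²)_j = dim I_j - dim (I²)_j`, while
`H(S/I)_j = dim S_j - dim I_j` and `H(S/I²)_j = dim S_j - dim (I²)_j`. Both sides of the equivalence
force `I₁ = 0`: on the right because `I ⊆ 𝔪` gives `I² ⊆ 𝔪²`, so that `(I/I²)₁ = I₁`. Then `I ⊆ 𝔪²`,
hence `I² ⊆ 𝔪⁴` and `(I/I²)_j = I_j` for `j < 4`, whereas `(I/I²)_j ≅ (S/I²)_j` for `j > 3`.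
Finally `S/I²` vanishes in all degrees `≥ 5` once it vanishes in degree `5`, as `S_j = S_5 S_(j-5)`.
-/

lemma nonempty_of_isHomogeneous {f : MvPolynomial σ k} {m : ℕ} (hf : f.IsHomogeneous m)
    (hf0 : f ≠ 0) (hm : m ≠ 0) : Nonempty σ := by
  by_contra h
  rw [not_nonempty_iff] at h
  exact hm (hf.inj_right (isHomogeneous_of_isEmpty σ k f) hf0)

lemma contract_C (c : k) (f : MvPolynomial σ k) : contract (C c) f = c • f := by
  rw [C_apply, contract_monomial, divMonomial_zero]

lemma isHomogeneous_divMonomial {f : MvPolynomial σ k} {m : ℕ} (hf : f.IsHomogeneous m)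
    (b : σ →₀ ℕ) : (f.divMonomial b).IsHomogeneous (m - b.degree) := by
  intro a ha
  rw [coeff_divMonomial] at ha
  have := hf ha
  simp only [Pi.one_def, ← Finsupp.degree_eq_weight_one, map_add] at this ⊢
  omega

lemma divMonomial_eq_zero_of_lt {f : MvPolynomial σ k} {m : ℕ} (hf : f.IsHomogeneous m)
    {b : σ →₀ ℕ} (hb : m < b.degree) : f.divMonomial b = 0 := by
  ext a
  rw [coeff_divMonomial, coeff_zero]
  exact hf.coeff_eq_zero (by rw [map_add]; omega)

lemma contract_eq_zero_of_lt {s f : MvPolynomial σ k} {i m : ℕ} (hs : s.IsHomogeneous i)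
    (hf : f.IsHomogeneous m) (h : m < i) : contract s f = 0 := by
  refine Finset.sum_eq_zero fun b hb => ?_
  have hb : b.degree = i := by
    rw [Finsupp.degree_eq_weight_one]; exact hs (mem_support_iff.mp hb)
  change _ • _ = 0
  rw [divMonomial_eq_zero_of_lt hf (hb ▸ h), smul_zero]

lemma homogeneousComponent_contract {f : MvPolynomial σ k} {m i : ℕ} (hf : f.IsHomogeneous m)
    (hi : i ≤ m) (s : MvPolynomial σ k) :
    homogeneousComponent (m - i) (contract s f) = contract (homogeneousComponent i s) f := by
  induction s using MvPolynomial.induction_on' with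
  | add p q hp hq => rw [contract_add_left, map_add, hp, hq, map_add, contract_add_left]
  | monomial b c =>
    rw [homogeneousComponent_of_mem (isHomogeneous_monomial c rfl), contract_monomial]
    by_cases hb : b.degree ≤ m
    · rw [homogeneousComponent_of_mem
        ((homogeneousSubmodule σ k _).smul_mem c (isHomogeneous_divMonomial hf b))]
      by_cases hib : i = b.degree
      · rw [if_pos (by omega), if_pos hib, contract_monomial]
      · rw [if_neg (by omega), if_neg hib, contract_zero_left]
    · rw [divMonomial_eq_zero_of_lt hf (not_le.mp hb), smul_zero, map_zero,
        if_neg (by omega), contract_zero_left]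

lemma homogeneousComponent_mem_annIdeal {f : MvPolynomial σ k} {m : ℕ} (hf : f.IsHomogeneous m)
    {s : MvPolynomial σ k} (hs : s ∈ annIdeal f) (i : ℕ) :
    homogeneousComponent i s ∈ annIdeal f := by
  change contract _ f = 0
  rcases le_or_gt i m with hi | hi
  · rw [← homogeneousComponent_contract hf hi, show contract s f = 0 from hs, map_zero]
  · exact contract_eq_zero_of_lt (homogeneousComponent_isHomogeneous i s) hf hi

lemma homogeneousSubmodule_le_annIdeal {f : MvPolynomial σ k} {m i : ℕ}
    (hf : f.IsHomogeneous m) (h : m < i) :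
    homogeneousSubmodule σ k i ≤ (annIdeal f).restrictScalars k :=
  fun _ hs => contract_eq_zero_of_lt hs hf h

noncomputable def homogeneousPart (I : Ideal (MvPolynomial σ k)) (i : ℕ) :
    Submodule k (MvPolynomial σ k) :=
  I.restrictScalars k ⊓ homogeneousSubmodule σ k i

lemma homogeneousPart_annIdeal_zero {f : MvPolynomial σ k} (hf0 : f ≠ 0) :
    homogeneousPart (annIdeal f) 0 = ⊥ := by
  refine eq_bot_iff.2 fun s ⟨hs, hs0⟩ => ?_
  have hsC : s = C (coeff 0 s) := by
    rw [← homogeneousComponent_zero, homogeneousComponent_eq_self hs0]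
  replace hs : contract s f = 0 := hs
  rw [hsC, contract_C, smul_eq_zero] at hs
  rw [Submodule.mem_bot, hsC, hs.resolve_right hf0, map_zero]

lemma coeff_mul_eq_zero_of_degree_lt {p q : MvPolynomial σ k} {d e : ℕ}
    (hp : ∀ a : σ →₀ ℕ, a.degree < d → p.coeff a = 0)
    (hq : ∀ a : σ →₀ ℕ, a.degree < e → q.coeff a = 0) :
    ∀ a : σ →₀ ℕ, a.degree < d + e → (p * q).coeff a = 0 := by
  classical
  intro a ha
  rw [coeff_mul]
  refine Finset.sum_eq_zero fun x hx => ?_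
  have hx := congr_arg Finsupp.degree (Finset.HasAntidiagonal.mem_antidiagonal.mp hx)
  rw [map_add] at hx
  rcases lt_or_ge x.1.degree d with h | h
  · rw [hp x.1 h, zero_mul]
  · rw [hq x.2 (by omega), mul_zero]

-- This is `𝔪 ^ d` for `𝔪` the ideal of the origin, described through coefficients.
def orderGeIdeal (d : ℕ) : Ideal (MvPolynomial σ k) where
  carrier := {p | ∀ a : σ →₀ ℕ, a.degree < d → p.coeff a = 0}
  zero_mem' _ _ := coeff_zero _
  add_mem' hp hq a ha := by rw [coeff_add, hp a ha, hq a ha, add_zero]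
  smul_mem' c _ hp := by
    simpa using coeff_mul_eq_zero_of_degree_lt (d := 0) (by simp) hp

lemma orderGeIdeal_mul_le (d e : ℕ) :
    (orderGeIdeal d : Ideal (MvPolynomial σ k)) * orderGeIdeal e ≤ orderGeIdeal (d + e) :=
  Ideal.mul_le.2 fun _ hp _ hq => coeff_mul_eq_zero_of_degree_lt hp hq

lemma homogeneousPart_eq_bot_of_le_orderGeIdeal {I : Ideal (MvPolynomial σ k)} {d j : ℕ}
    (hI : I ≤ orderGeIdeal d) (hj : j < d) : homogeneousPart I j = ⊥ := by
  refine eq_bot_iff.2 fun s ⟨hs, hsj⟩ => (Submodule.mem_bot k).2 ?_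
  ext a
  rw [coeff_zero]
  rcases eq_or_ne a.degree j with ha | ha
  · exact hI hs a (ha ▸ hj)
  · exact hsj.coeff_eq_zero ha

lemma annIdeal_le_orderGeIdeal {f : MvPolynomial σ k} {m d : ℕ} (hf : f.IsHomogeneous m)
    (h : ∀ j < d, homogeneousPart (annIdeal f) j = ⊥) : annIdeal f ≤ orderGeIdeal d := by
  intro s hs a ha
  have hpart : homogeneousComponent a.degree s ∈ homogeneousPart (annIdeal f) a.degree :=
    ⟨homogeneousComponent_mem_annIdeal hf hs _, homogeneousComponent_mem _ s⟩
  rw [h _ ha, Submodule.mem_bot] at hpart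
  simpa [coeff_homogeneousComponent] using congr_arg (coeff a) hpart

lemma annIdeal_le_orderGeIdeal_one {f : MvPolynomial σ k} {m : ℕ} (hf : f.IsHomogeneous m)
    (hf0 : f ≠ 0) : annIdeal f ≤ orderGeIdeal 1 :=
  annIdeal_le_orderGeIdeal hf fun j hj => by
    rw [Nat.lt_one_iff.mp hj]; exact homogeneousPart_annIdeal_zero hf0

lemma homogeneousSubmodule_le_of_le {I : Ideal (MvPolynomial σ k)} {d j : ℕ}
    (hd : homogeneousSubmodule σ k d ≤ I.restrictScalars k) (hj : d ≤ j) :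
    homogeneousSubmodule σ k j ≤ I.restrictScalars k := by
  rw [homogeneousSubmodule_eq_finsupp_supported, AddMonoidAlgebra.supported_eq_span_single,
    Submodule.span_le]
  rintro _ ⟨a, ha, rfl⟩
  obtain ⟨b, hba, hb⟩ := a.exists_le_degree_eq d (by rw [show a.degree = j from ha]; exact hj)
  have hsplit : AddMonoidAlgebra.single a (1 : k) = monomial b 1 * monomial (a - b) 1 := by
    rw [monomial_mul, one_mul, add_tsub_cancel_of_le hba]; rfl
  change AddMonoidAlgebra.single a (1 : k) ∈ I
  rw [hsplit]
  exact I.mul_mem_right _ (hd (isHomogeneous_monomial 1 hb))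

lemma Submodule.finrank_quotient_comap_subtype_add_finrank_inf {K M : Type*} [DivisionRing K]
    [AddCommGroup M] [Module K M] (p q : Submodule K M) [FiniteDimensional K p] :
    Module.finrank K (p ⧸ q.comap p.subtype) + Module.finrank K ↥(q ⊓ p) =
      Module.finrank K p := by
  rw [inf_comm, ← Submodule.map_comap_subtype, Submodule.finrank_map_subtype_eq]
  exact Submodule.finrank_quotient_add_finrank _

lemma finrank_homogeneousSubmodule (i : ℕ) :
    Module.finrank k (homogeneousSubmodule σ k i) = (Nat.card σ + i - 1).choose i := by
  classical
  rw [homogeneousSubmodule_eq_finsupp_supported,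
    (AddMonoidAlgebra.supportedEquivFinsupp _).finrank_eq,
    Module.finrank_eq_nat_card_basis (Finsupp.basisSingleOne), ← Sym.natCard_sym_eq_choose,
    Nat.card_congr (Sym.equivNatSum σ i)]
  rfl

instance [Finite σ] (i : ℕ) : FiniteDimensional k (homogeneousSubmodule σ k i) :=
  Module.Finite.iff_fg.2 (homogeneousSubmodule_fg σ k i)

instance [Finite σ] (I : Ideal (MvPolynomial σ k)) (i : ℕ) :
    FiniteDimensional k (homogeneousPart I i) :=
  Submodule.finiteDimensional_of_le inf_le_right

section Finite

variable [Finite σ]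

lemma hilbQ_add_finrank_homogeneousPart (I : Ideal (MvPolynomial σ k)) (i : ℕ) :
    hilbQ I i + Module.finrank k (homogeneousPart I i) = (Nat.card σ + i - 1).choose i := by
  rw [← finrank_homogeneousSubmodule (k := k)]
  exact Submodule.finrank_quotient_comap_subtype_add_finrank_inf _ _

lemma hilbConormal_add_finrank_homogeneousPart (I : Ideal (MvPolynomial σ k)) (j : ℕ) :
    hilbConormal I j + Module.finrank k (homogeneousPart (I ^ 2) j) =
      Module.finrank k (homogeneousPart I j) := by
  have hsq : (I ^ 2).restrictScalars k ≤ I.restrictScalars k := Ideal.pow_le_self two_ne_zero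
  have hpart : (I ^ 2).restrictScalars k ⊓ homogeneousPart I j = homogeneousPart (I ^ 2) j := by
    rw [homogeneousPart, ← inf_assoc, inf_eq_left.2 hsq, homogeneousPart]
  rw [← hpart]
  exact Submodule.finrank_quotient_comap_subtype_add_finrank_inf _ _

lemma hilbQ_eq_zero_iff {I : Ideal (MvPolynomial σ k)} {i : ℕ} :
    hilbQ I i = 0 ↔ homogeneousSubmodule σ k i ≤ I.restrictScalars k := by
  rw [hilbQ, Module.finrank_eq_zero_iff_of_free, Submodule.Quotient.subsingleton_iff,
    Submodule.comap_subtype_eq_top]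

variable {f : MvPolynomial σ k} {m : ℕ}

lemma hilbQ_annIdeal_zero (hf0 : f ≠ 0) : hilbQ (annIdeal f) 0 = 1 := by
  have h := hilbQ_add_finrank_homogeneousPart (annIdeal f) 0
  rwa [homogeneousPart_annIdeal_zero hf0, finrank_bot, add_zero, Nat.choose_zero_right] at h

lemma hilbQ_annIdeal_of_lt (hf : f.IsHomogeneous m) {i : ℕ} (h : m < i) :
    hilbQ (annIdeal f) i = 0 :=
  hilbQ_eq_zero_iff.2 (homogeneousSubmodule_le_annIdeal hf h)

lemma hilbQ_eq_zero_of_le {I : Ideal (MvPolynomial σ k)} {d j : ℕ} (h : hilbQ I d = 0)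
    (hj : d ≤ j) : hilbQ I j = 0 :=
  hilbQ_eq_zero_iff.2 (homogeneousSubmodule_le_of_le (hilbQ_eq_zero_iff.1 h) hj)

lemma hilbConormal_eq_hilbQ_sq {I : Ideal (MvPolynomial σ k)} {j : ℕ}
    (h : homogeneousSubmodule σ k j ≤ I.restrictScalars k) :
    hilbConormal I j = hilbQ (I ^ 2) j := by
  have hC := hilbConormal_add_finrank_homogeneousPart I j
  have hQ := hilbQ_add_finrank_homogeneousPart (I ^ 2) j
  have hI : homogeneousPart I j = homogeneousSubmodule σ k j := inf_eq_right.2 h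
  rw [hI, finrank_homogeneousSubmodule] at hC
  omega

lemma hilbConormal_eq_zero_of_le_orderGeIdeal {I : Ideal (MvPolynomial σ k)} {d j : ℕ}
    (hI : I ≤ orderGeIdeal d) (hj : j < d) : hilbConormal I j = 0 := by
  have h := hilbConormal_add_finrank_homogeneousPart I j
  rw [homogeneousPart_eq_bot_of_le_orderGeIdeal hI hj, finrank_bot] at h
  omega

lemma hilbConormal_add_hilbQ_of_le_orderGeIdeal {I : Ideal (MvPolynomial σ k)} {d j : ℕ}
    (hI : I ≤ orderGeIdeal d) (hj : j < d + d) :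
    hilbConormal I j + hilbQ I j = (Nat.card σ + j - 1).choose j := by
  have hsq : I ^ 2 ≤ orderGeIdeal (d + d) :=
    (pow_two I).trans_le ((Ideal.mul_mono hI hI).trans (orderGeIdeal_mul_le d d))
  have hC := hilbConormal_add_finrank_homogeneousPart I j
  have hQ := hilbQ_add_finrank_homogeneousPart I j
  rw [homogeneousPart_eq_bot_of_le_orderGeIdeal hsq hj, finrank_bot] at hC
  omega

lemma annIdeal_le_orderGeIdeal_two_iff (hf : f.IsHomogeneous m) (hf0 : f ≠ 0) :
    annIdeal f ≤ orderGeIdeal 2 ↔ hilbQ (annIdeal f) 1 = Nat.card σ := by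
  have h := hilbQ_add_finrank_homogeneousPart (annIdeal f) 1
  rw [Nat.add_sub_cancel, Nat.choose_one_right] at h
  constructor
  · intro hI
    rw [homogeneousPart_eq_bot_of_le_orderGeIdeal hI one_lt_two, finrank_bot] at h
    omega
  · intro hq
    refine annIdeal_le_orderGeIdeal hf fun j hj => ?_
    interval_cases j
    · exact homogeneousPart_annIdeal_zero hf0
    · exact Submodule.finrank_eq_zero.1 (by omega)

end Finite

theorem small_tangent_space_iff_conormal_hilbert_function_general
    (K : Type*) [Field K] (n : ℕ)
    (f : MvPolynomial (Fin n) K) (hf : f.IsHomogeneous 3) (hf0 : f ≠ 0) :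
    SmallTangentSpace n f ↔
      (hilbConormal (annIdeal f) 2 = (n + 1).choose 2 - n ∧
       hilbConormal (annIdeal f) 3 = (n + 2).choose 3 - 1 ∧
       hilbConormal (annIdeal f) 4 = n ∧
       ∀ j : ℕ, j ≠ 2 → j ≠ 3 → j ≠ 4 → hilbConormal (annIdeal f) j = 0) := by
  have hn : 0 < n := Fin.pos_iff_nonempty.2 (nonempty_of_isHomogeneous hf hf0 three_ne_zero)
  have hN2 : n ≤ (n + 1).choose 2 := by rw [Nat.choose_succ_succ, Nat.choose_one_right]; omega
  have hN3 : 1 ≤ (n + 2).choose 3 := Nat.choose_pos (by omega)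
  have hsum {d j : ℕ} (hI : annIdeal f ≤ orderGeIdeal d) (hj : j < d + d) :
      hilbConormal (annIdeal f) j + hilbQ (annIdeal f) j = (n + j - 1).choose j := by
    simpa using hilbConormal_add_hilbQ_of_le_orderGeIdeal hI hj
  have hhigh {j : ℕ} (hj : 3 < j) : hilbConormal (annIdeal f) j = hilbQ (annIdeal f ^ 2) j :=
    hilbConormal_eq_hilbQ_sq (homogeneousSubmodule_le_annIdeal hf hj)
  have hI2 : annIdeal f ≤ orderGeIdeal 2 ↔ hilbQ (annIdeal f) 1 = n := by
    simpa using annIdeal_le_orderGeIdeal_two_iff hf hf0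
  constructor
  · rintro ⟨-, hq1, hq2, hq3, -, hq4, hq5⟩
    have hI := hI2.2 hq1
    have h2 : _ = (n + 1).choose 2 := hsum hI (j := 2) (by norm_num)
    have h3 : _ = (n + 2).choose 3 := hsum hI (j := 3) (by norm_num)
    refine ⟨by omega, by omega, by rw [hhigh (by norm_num), hq4], fun j hj2 hj3 hj4 => ?_⟩
    rcases (show j < 2 ∨ 4 < j by omega) with hj | hj
    · exact hilbConormal_eq_zero_of_le_orderGeIdeal hI hj
    · rw [hhigh (by omega)]
      exact hilbQ_eq_zero_of_le hq5 (by omega)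
  · rintro ⟨hc2, hc3, hc4, hc⟩
    have h1 := hsum (annIdeal_le_orderGeIdeal_one hf hf0) (j := 1) (by norm_num)
    rw [hc 1 (by norm_num) (by norm_num) (by norm_num)] at h1
    have hq1 : hilbQ (annIdeal f) 1 = n := by simpa using h1
    have h2 : _ = (n + 1).choose 2 := hsum (hI2.2 hq1) (j := 2) (by norm_num)
    have h3 : _ = (n + 2).choose 3 := hsum (hI2.2 hq1) (j := 3) (by norm_num)
    exact ⟨hilbQ_annIdeal_zero hf0, hq1, by omega, by omega, fun i hi => hilbQ_annIdeal_of_lt hf hi,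
      by rw [← hhigh (by norm_num), hc4],
      by rw [← hhigh (by norm_num), hc 5 (by norm_num) (by norm_num) (by norm_num)]⟩

theorem small_tangent_space_iff_conormal_hilbert_function
    (K : Type*) [Field K] (n : ℕ) (hn : 0 < n)
    (f : MvPolynomial (Fin n) K) (hf : f.IsHomogeneous 3) (hf0 : f ≠ 0) :
    SmallTangentSpace n f ↔
      (hilbConormal (annIdeal f) 2 = (n + 1).choose 2 - n ∧
       hilbConormal (annIdeal f) 3 = (n + 2).choose 3 - 1 ∧
       hilbConormal (annIdeal f) 4 = n ∧
       ∀ j : ℕ, j ≠ 2 → j ≠ 3 → j ≠ 4 → hilbConormal (annIdeal f) j = 0) :=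
  small_tangent_space_iff_conormal_hilbert_function_general K n f hf hf0
end

section
/- For all letters x,y,z,w ∈ {a,b,c} and all indices i,j,k,t (mod m) such that x_i y_j ∈ I, the monomial x_i y_j z_k w_t lies in the ideal J. -/
open MvPolynomial

variable (K : Type*) [Field K]

/-- The variable `x_i` (with `x ∈ {a,b,c}` encoded as `Fin 3`). -/
noncomputable def V (m : ℕ) (x : Fin 3) (i : ZMod m) : MvPolynomial (Fin 3 × ZMod m) K :=
  MvPolynomial.X (x, i)

/-- The generators of the ideal `I`. -/
noncomputable def IabcGens (m : ℕ) : Set (MvPolynomial (Fin 3 × ZMod m) K) :=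
  {p | ∃ (x y : Fin 3) (i j : ZMod m),
      j ≠ i - 1 ∧ j ≠ i ∧ j ≠ i + 1 ∧ p = V K m x i * V K m y j} ∪
  {p | ∃ (x y : Fin 3) (i j : ZMod m), x ≠ y ∧
      p = V K m x i * V K m y (i + 1) - V K m x j * V K m y (j + 1)} ∪
  {p | ∃ (x y z : Fin 3) (i : ZMod m), x ≠ y ∧ x ≠ z ∧ y ≠ z ∧
      p = V K m x i ^ 2 - V K m y (i - 1) * V K m z (i - 1)} ∪
  {p | ∃ (x y z : Fin 3) (i : ZMod m), x ≠ y ∧ x ≠ z ∧ y ≠ z ∧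
      p = V K m x i * V K m y i - V K m z (i - 1) * V K m z i}

/-- The ideal `I`. -/
noncomputable def Iabc (m : ℕ) : Ideal (MvPolynomial (Fin 3 × ZMod m) K) :=
  Ideal.span (IabcGens K m)

/-- The ideal `J = I² + (a_i a_{i+1} a_{i+2}², b_i b_{i+1} b_{i+2}², c_i c_{i+1} c_{i+2}²)`. -/
noncomputable def Jabc (m : ℕ) : Ideal (MvPolynomial (Fin 3 × ZMod m) K) :=
  Iabc K m ^ 2 ⊔
    Ideal.span {p | ∃ (x : Fin 3) (i : ZMod m),
      p = V K m x i * V K m x (i + 1) * V K m x (i + 2) ^ 2}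

namespace EGH

variable {K : Type*} [Field K] {m : ℕ}

/-- `j` is "far" from `i`. -/
def Far (m : ℕ) (i j : ZMod m) : Prop := j ≠ i - 1 ∧ j ≠ i ∧ j ≠ i + 1

lemma zne (hm : 6 ≤ m) (k : ℕ) (h1 : 1 ≤ k) (h2 : k ≤ 5) : (k : ZMod m) ≠ 0 := by
  intro h
  rw [ZMod.natCast_eq_zero_iff] at h
  exact absurd (Nat.le_of_dvd (by omega) h) (by omega)


lemma znat (k : ℕ) (h1 : 0 < k) (h2 : k < m) : (k : ZMod m) ≠ 0 := by
  intro h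
  rw [ZMod.natCast_eq_zero_iff] at h
  exact absurd (Nat.le_of_dvd h1 h) (by omega)

lemma far_of (hm : 6 ≤ m) {i j : ZMod m} (k : ℕ) (hk1 : 2 ≤ k) (hk2 : k ≤ 4)
    (h : j = i + (k : ZMod m)) : Far m i j := by
  refine ⟨fun hh => zne hm (k+1) (by omega) (by omega) ?_,
          fun hh => zne hm k (by omega) (by omega) ?_,
          fun hh => zne hm (k-1) (by omega) (by omega) ?_⟩
  · push_cast; linear_combination hh - h
  · linear_combination hh - h
  · push_cast [Nat.cast_sub (by omega : 1 ≤ k)]; linear_combination hh - h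

lemma far_of_neg (hm : 6 ≤ m) {i j : ZMod m} (k : ℕ) (hk1 : 2 ≤ k) (hk2 : k ≤ 4)
    (h : j = i - (k : ZMod m)) : Far m i j := by
  refine ⟨fun hh => zne hm (k-1) (by omega) (by omega) ?_,
          fun hh => zne hm k (by omega) (by omega) ?_,
          fun hh => zne hm (k+1) (by omega) (by omega) ?_⟩
  · push_cast [Nat.cast_sub (by omega : 1 ≤ k)]; linear_combination h - hh
  · linear_combination h - hh
  · push_cast; linear_combination h - hh

lemma memI1 (x y : Fin 3) {i j : ZMod m} (h : Far m i j) :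
    V K m x i * V K m y j ∈ Iabc K m :=
  Ideal.subset_span (Set.mem_union_left _ (Set.mem_union_left _ (Set.mem_union_left _
    ⟨x, y, i, j, h.1, h.2.1, h.2.2, rfl⟩)))

lemma memI2 {x y : Fin 3} (hxy : x ≠ y) (i j : ZMod m) :
    V K m x i * V K m y (i+1) - V K m x j * V K m y (j+1) ∈ Iabc K m :=
  Ideal.subset_span (Set.mem_union_left _ (Set.mem_union_left _ (Set.mem_union_right _
    ⟨x, y, i, j, hxy, rfl⟩)))

lemma memI3 {x y z : Fin 3} (hxy : x ≠ y) (hxz : x ≠ z) (hyz : y ≠ z) (i : ZMod m) :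
    V K m x (i+1) ^ 2 - V K m y i * V K m z i ∈ Iabc K m := by
  have h : V K m x (i+1) ^ 2 - V K m y ((i+1)-1) * V K m z ((i+1)-1) ∈ Iabc K m := by
    apply Ideal.subset_span
    exact Set.mem_union_left _ (Set.mem_union_right _ ⟨x, y, z, i+1, hxy, hxz, hyz, rfl⟩)
  rwa [show i + 1 - 1 = i from by ring] at h

lemma memI4 {x y z : Fin 3} (hxy : x ≠ y) (hxz : x ≠ z) (hyz : y ≠ z) (i : ZMod m) :
    V K m x i * V K m y i - V K m z (i-1) * V K m z i ∈ Iabc K m :=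
  Ideal.subset_span (Set.mem_union_right _ ⟨x, y, z, i, hxy, hxz, hyz, rfl⟩)

lemma I2J {p q : MvPolynomial (Fin 3 × ZMod m) K} (hp : p ∈ Iabc K m) (hq : q ∈ Iabc K m) :
    p * q ∈ Jabc K m := by
  apply Ideal.mem_sup_left
  rw [pow_two]
  exact Ideal.mul_mem_mul hp hq

lemma cubeJ (x : Fin 3) (i : ZMod m) :
    V K m x i * V K m x (i + 1) * V K m x (i + 2) ^ 2 ∈ Jabc K m :=
  Ideal.mem_sup_right (Ideal.subset_span ⟨x, i, rfl⟩)

lemma Jeq {p q : MvPolynomial (Fin 3 × ZMod m) K} (h : p = q) (hq : q ∈ Jabc K m) :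
    p ∈ Jabc K m := h ▸ hq

lemma Meq {M : Ideal (MvPolynomial (Fin 3 × ZMod m) K)}
    {p q : MvPolynomial (Fin 3 × ZMod m) K} (h : p = q) (hq : q ∈ M) : p ∈ M := h ▸ hq

lemma rwJ {f q q' : MvPolynomial (Fin 3 × ZMod m) K} (hf : f ∈ Iabc K m)
    (hd : q - q' ∈ Iabc K m) (h : f * q' ∈ Jabc K m) : f * q ∈ Jabc K m := by
  have e : f * q = f * (q - q') + f * q' := by ring
  rw [e]
  exact add_mem (I2J hf hd) h

lemma T3 {q1 q2 r s : MvPolynomial (Fin 3 × ZMod m) K}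
    (h1 : q1 - r ∈ Iabc K m) (h2 : q2 - s ∈ Iabc K m)
    (ha : q1 * s ∈ Jabc K m) (hb : r * q2 ∈ Jabc K m) (hc : r * s ∈ Jabc K m) :
    q1 * q2 ∈ Jabc K m := by
  have e : q1 * q2 = (q1 - r) * (q2 - s) + q1 * s + r * q2 - r * s := by ring
  rw [e]
  exact sub_mem (add_mem (add_mem (I2J h1 h2) ha) hb) hc

def oth (x y : Fin 3) : Fin 3 := ⟨(3 - x.val - y.val) % 3, Nat.mod_lt _ (by norm_num)⟩

lemma oth_ne1 {x y : Fin 3} (h : x ≠ y) : oth x y ≠ x := by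
  revert h; fin_cases x <;> fin_cases y <;> decide

lemma oth_ne2 {x y : Fin 3} (h : x ≠ y) : oth x y ≠ y := by
  revert h; fin_cases x <;> fin_cases y <;> decide

end EGH

namespace EGH
set_option maxHeartbeats 1000000

variable {K : Type*} [Field K] {m : ℕ}

lemma far_symm {i j : ZMod m} (h : Far m i j) : Far m j i :=
  ⟨fun hh => h.2.2 (by linear_combination -hh),
   fun hh => h.2.1 (by linear_combination -hh),
   fun hh => h.1 (by linear_combination -hh)⟩

def o1 (g : Fin 3) : Fin 3 := ⟨(g.val + 1) % 3, Nat.mod_lt _ (by norm_num)⟩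
def o2 (g : Fin 3) : Fin 3 := ⟨(g.val + 2) % 3, Nat.mod_lt _ (by norm_num)⟩

lemma o1_ne (g : Fin 3) : g ≠ o1 g := by fin_cases g <;> decide
lemma o2_ne (g : Fin 3) : g ≠ o2 g := by fin_cases g <;> decide
lemma o12_ne (g : Fin 3) : o1 g ≠ o2 g := by fin_cases g <;> decide

/-- far * cross -/
lemma L2 (hm : 6 ≤ m) (x y u w : Fin 3) (i j s sp : ZMod m) (hsp : sp = s + 1)
    (huw : u ≠ w) (hij : Far m i j) :
    (V K m x i * V K m y j) * (V K m u s * V K m w sp) ∈ Jabc K m := by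
  subst hsp
  by_cases h2 : j = i + 2
  · refine rwJ (memI1 x y hij) (memI2 huw s (i+4)) (Jeq (by ring) (I2J (memI1 x u ?_) (memI1 y w ?_)))
    · exact far_of hm 4 (by norm_num) (by norm_num) (by push_cast; ring)
    · exact far_of hm 3 (by norm_num) (by norm_num) (by push_cast; rw [h2]; ring)
  by_cases h3 : j = i + 3
  · refine rwJ (memI1 x y hij) (memI2 huw s (i+4)) (Jeq (by ring) (I2J (memI1 x u ?_) (memI1 y w ?_)))
    · exact far_of hm 4 (by norm_num) (by norm_num) (by push_cast; ring)
    · exact far_of hm 2 (by norm_num) (by norm_num) (by push_cast; rw [h3]; ring)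
  by_cases h4 : j = i + 4
  · refine rwJ (memI1 x y hij) (memI2 huw s (i+2))
      (Jeq (by ring) (I2J (memI1 x w ?_) (memI1 y u ?_)))
    · exact far_of hm 3 (by norm_num) (by norm_num) (by push_cast; ring)
    · exact far_of_neg hm 2 (by norm_num) (by norm_num) (by push_cast; rw [h4]; ring)
  · refine rwJ (memI1 x y hij) (memI2 huw s (i+2)) (Jeq (by ring) (I2J (memI1 x u ?_) (memI1 y w ?_)))
    · exact far_of hm 2 (by norm_num) (by norm_num) (by push_cast; ring)
    · exact ⟨fun hh => h4 (by linear_combination -hh),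
             fun hh => h3 (by linear_combination -hh),
             fun hh => h2 (by linear_combination -hh)⟩

/-- cross * cross -/
lemma L3 (hm : 6 ≤ m) (u w u' w' : Fin 3) (s sp s' sp' : ZMod m)
    (h1 : sp = s + 1) (h2 : sp' = s' + 1) (huw : u ≠ w) (huw' : u' ≠ w') :
    (V K m u s * V K m w sp) * (V K m u' s' * V K m w' sp') ∈ Jabc K m := by
  subst h1; subst h2
  have fp : ∀ (kk : ℕ), 2 ≤ kk → kk ≤ 4 → ∀ (p q : ZMod m), q = p + (kk : ZMod m) → Far m p q :=
    fun kk h1 h2 p q h => far_of hm kk h1 h2 h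
  have fn : ∀ (kk : ℕ), 2 ≤ kk → kk ≤ 4 → ∀ (p q : ZMod m), q = p - (kk : ZMod m) → Far m p q :=
    fun kk h1 h2 p q h => far_of_neg hm kk h1 h2 h
  by_cases c0 : s' = s
  · rw [c0]
    refine T3 (memI2 huw s (s+2)) (memI2 huw' s (s+4))
      (Jeq (by ring) (I2J (memI1 u u' (fp 4 (by norm_num) (by norm_num) _ _ (by push_cast; ring)))
        (memI1 w w' (fp 4 (by norm_num) (by norm_num) _ _ (by push_cast; ring)))))
      (Jeq (by ring) (I2J (memI1 u u' (fn 2 (by norm_num) (by norm_num) _ _ (by push_cast; ring)))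
        (memI1 w w' (fn 2 (by norm_num) (by norm_num) _ _ (by push_cast; ring)))))
      (Jeq (by ring) (I2J (memI1 u u' (fp 2 (by norm_num) (by norm_num) _ _ (by push_cast; ring)))
        (memI1 w w' (fp 2 (by norm_num) (by norm_num) _ _ (by push_cast; ring)))))
  by_cases c1 : s' = s + 1
  · rw [c1]
    refine T3 (memI2 huw s (s+4)) (memI2 huw' (s+1) (s+2))
      (Jeq (by ring) (I2J (memI1 u u' (fp 2 (by norm_num) (by norm_num) _ _ (by push_cast; ring)))
        (memI1 w w' (fp 2 (by norm_num) (by norm_num) _ _ (by push_cast; ring)))))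
      (Jeq (by ring) (I2J (memI1 u u' (fn 3 (by norm_num) (by norm_num) _ _ (by push_cast; ring)))
        (memI1 w w' (fn 3 (by norm_num) (by norm_num) _ _ (by push_cast; ring)))))
      (Jeq (by ring) (I2J (memI1 u u' (fn 2 (by norm_num) (by norm_num) _ _ (by push_cast; ring)))
        (memI1 w w' (fn 2 (by norm_num) (by norm_num) _ _ (by push_cast; ring)))))
  by_cases c2 : s' = s - 1
  · rw [c2]
    refine T3 (memI2 huw s (s+1)) (memI2 huw' (s-1) (s-3))
      (Jeq (by ring) (I2J (memI1 u u' (fn 3 (by norm_num) (by norm_num) _ _ (by push_cast; ring)))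
        (memI1 w w' (fn 3 (by norm_num) (by norm_num) _ _ (by push_cast; ring)))))
      (Jeq (by ring) (I2J (memI1 u u' (fn 2 (by norm_num) (by norm_num) _ _ (by push_cast; ring)))
        (memI1 w w' (fn 2 (by norm_num) (by norm_num) _ _ (by push_cast; ring)))))
      (Jeq (by ring) (I2J (memI1 u u' (fn 4 (by norm_num) (by norm_num) _ _ (by push_cast; ring)))
        (memI1 w w' (fn 4 (by norm_num) (by norm_num) _ _ (by push_cast; ring)))))
  · refine T3 (memI2 huw s (s'+2)) (memI2 huw' s' (s+2))
      (Jeq (by ring) (I2J (memI1 u u' (fp 2 (by norm_num) (by norm_num) _ _ (by push_cast; ring)))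
        (memI1 w w' (fp 2 (by norm_num) (by norm_num) _ _ (by push_cast; ring)))))
      (Jeq (by ring) (I2J (memI1 u u' (fn 2 (by norm_num) (by norm_num) _ _ (by push_cast; ring)))
        (memI1 w w' (fn 2 (by norm_num) (by norm_num) _ _ (by push_cast; ring)))))
      (Jeq (by ring) (I2J (memI1 u u' ?_) (memI1 w w' ?_)))
    · exact ⟨fun hh => c1 (by linear_combination -hh),
             fun hh => c0 (by linear_combination -hh),
             fun hh => c2 (by linear_combination -hh)⟩
    · exact ⟨fun hh => c1 (by linear_combination -hh),
             fun hh => c0 (by linear_combination -hh),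
             fun hh => c2 (by linear_combination -hh)⟩

end EGH

namespace EGH

variable {K : Type*} [Field K] {m : ℕ}

/-- The chain `γ_k γ_{k+n+1} γ_{k+n+2}² ∈ J`, by descent to the cube generator. -/
lemma LU (hm : 6 ≤ m) (g : Fin 3) :
    ∀ (n : ℕ), n + 4 ≤ m → ∀ (k : ZMod m),
      V K m g k * (V K m g (k + (n : ZMod m) + 1) * V K m g (k + (n : ZMod m) + 2) ^ 2)
        ∈ Jabc K m := by
  intro n
  induction n with
  | zero =>
    intro _ k
    rw [show ((0:ℕ) : ZMod m) = 0 from Nat.cast_zero]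
    rw [show k + 0 + 1 = k + 1 from by ring, show k + 0 + 2 = k + 2 from by ring]
    exact Jeq (by ring) (cubeJ g k)
  | succ n ih =>
    intro hn k
    rw [show ((n+1:ℕ) : ZMod m) = (n : ZMod m) + 1 from by push_cast; ring]
    rw [show k + ((n : ZMod m) + 1) + 1 = k + (n : ZMod m) + 2 from by ring,
        show k + ((n : ZMod m) + 1) + 2 = k + (n : ZMod m) + 3 from by ring]
    -- goal: V g k * (V g (k+n+2) * V g (k+n+3)^2) ∈ J
    have e1 : ((n : ZMod m) + 3) ≠ 0 := by
      have := znat (m := m) (n+3) (by omega) (by omega); push_cast at this; exact this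
    have e2 : ((n : ZMod m) + 2) ≠ 0 := by
      have := znat (m := m) (n+2) (by omega) (by omega); push_cast at this; exact this
    have e3 : ((n : ZMod m) + 1) ≠ 0 := by
      have := znat (m := m) (n+1) (by omega) (by omega); push_cast at this; exact this
    have hfar : Far m k (k + (n : ZMod m) + 2) :=
      ⟨fun hh => e1 (by linear_combination hh),
       fun hh => e2 (by linear_combination hh),
       fun hh => e3 (by linear_combination hh)⟩
    have h3 := memI3 (K := K) (o1_ne g) (o2_ne g) (o12_ne g) (k + (n : ZMod m) + 2)
    rw [show k + (n : ZMod m) + 2 + 1 = k + (n : ZMod m) + 3 from by ring] at h3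
    have h4 := memI4 (K := K) (o12_ne g) (Ne.symm (o1_ne g)) (Ne.symm (o2_ne g))
      (i := k + (n : ZMod m) + 2)
    rw [show k + (n : ZMod m) + 2 - 1 = k + (n : ZMod m) + 1 from by ring] at h4
    have hd := add_mem h3 h4
    have hgoal : (V K m g k * V K m g (k + (n : ZMod m) + 2)) *
        (V K m g (k + (n : ZMod m) + 3) ^ 2) ∈ Jabc K m := by
      refine rwJ (q' := V K m g (k + (n : ZMod m) + 1) * V K m g (k + (n : ZMod m) + 2))
        (memI1 g g hfar) (Meq ?_ hd) ?_
      · ring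
      · exact Jeq (by ring) (ih (by omega) k)
    exact Jeq (by ring) hgoal

/-- The "triple with far spectator": `e_k · x_l y_l z_l ∈ J`. -/
lemma LT (hm : 6 ≤ m) (e x y z : Fin 3) (k l : ZMod m)
    (hxy : x ≠ y) (hxz : x ≠ z) (hyz : y ≠ z) (hfar : Far m k l) :
    V K m e k * (V K m x l * V K m y l * V K m z l) ∈ Jabc K m := by
  haveI : NeZero m := ⟨by omega⟩
  -- the LU input
  have key : ∀ (gg : Fin 3), V K m gg k * (V K m gg (l-1) * V K m gg l ^ 2) ∈ Jabc K m := by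
    intro gg
    have h0 : (l - k).val < m := ZMod.val_lt _
    have hc : (((l - k).val : ℕ) : ZMod m) = l - k := ZMod.natCast_zmod_val _
    have h1 : (l - k).val ≠ 0 := by
      intro h
      exact hfar.2.1 (by have := (ZMod.val_eq_zero (l-k)).mp h; linear_combination this)
    have h2 : (l - k).val ≠ 1 := by
      intro h
      rw [h] at hc
      exact hfar.2.2 (by push_cast at hc; linear_combination -hc)
    have h3 : (l - k).val ≠ m - 1 := by
      intro h
      rw [h] at hc
      rw [Nat.cast_sub (by omega : 1 ≤ m), ZMod.natCast_self] at hc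
      exact hfar.1 (by push_cast at hc; linear_combination -hc)
    have hcast : (((l - k).val - 2 : ℕ) : ZMod m) = l - k - 2 := by
      rw [Nat.cast_sub (by omega : 2 ≤ (l - k).val), hc]; push_cast; ring
    have := LU (K := K) hm gg ((l - k).val - 2) (by omega) k
    rw [hcast] at this
    rw [show k + (l - k - 2) + 1 = l - 1 from by ring,
        show k + (l - k - 2) + 2 = l from by ring] at this
    exact this
  have he : e = x ∨ e = y ∨ e = z := by
    revert hxy hxz hyz; fin_cases e <;> fin_cases x <;> fin_cases y <;> fin_cases z <;> decide
  rcases he with he | he | he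
  · subst he
    have hd := memI4 (K := K) (x := y) (y := z) (z := e) hyz (Ne.symm hxy) (Ne.symm hxz) (i := l)
    exact Jeq (show _ = (V K m e k * V K m e l) * (V K m y l * V K m z l) from by ring)
      (rwJ (memI1 e e hfar) hd (Jeq (by ring) (key e)))
  · subst he
    have hd := memI4 (K := K) (x := x) (y := z) (z := e) hxz hxy (Ne.symm hyz) (i := l)
    exact Jeq (show _ = (V K m e k * V K m e l) * (V K m x l * V K m z l) from by ring)
      (rwJ (memI1 e e hfar) hd (Jeq (by ring) (key e)))
  · subst he
    have hd := memI4 (K := K) (x := x) (y := y) (z := e) hxy hxz hyz (i := l)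
    exact Jeq (show _ = (V K m e k * V K m e l) * (V K m x l * V K m y l) from by ring)
      (rwJ (memI1 e e hfar) hd (Jeq (by ring) (key e)))

end EGH

namespace EGH

variable {K : Type*} [Field K] {m : ℕ}

lemma dP1 (g : Fin 3) (lm l : ZMod m) (e1 : lm = l - 1) :
    (V K m g lm * V K m g l) - (V K m (o1 g) l * V K m (o2 g) l) ∈ Iabc K m := by
  subst e1
  exact Meq (by ring) (neg_mem (memI4 (x := o1 g) (y := o2 g) (z := g)
    (o12_ne g) ((o1_ne g).symm) ((o2_ne g).symm) l))

lemma dP3 (g : Fin 3) (lm l lp : ZMod m) (e1 : lm = l - 1) (e2 : lp = l + 1) :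
    (V K m g lm * V K m g l) - (V K m g lp)^2 ∈ Iabc K m := by
  subst e1; subst e2
  have h3 := memI3 (K := K) (x := g) (y := o1 g) (z := o2 g)
    (o1_ne g) (o2_ne g) (o12_ne g) l
  have h4 := memI4 (K := K) (x := o1 g) (y := o2 g) (z := g)
    (o12_ne g) ((o1_ne g).symm) ((o2_ne g).symm) l
  exact Meq (by ring) (neg_mem (add_mem h3 h4))

lemma dSq (g : Fin 3) (lm l lp : ZMod m) (e1 : lm = l - 1) (e2 : lp = l + 1) :
    (V K m g lp)^2 - (V K m g lm * V K m g l) ∈ Iabc K m :=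
  Meq (by ring) (neg_mem (dP3 g lm l lp e1 e2))

/-- far·class, case `i = l`. -/
lemma L4zero (hm : 6 ≤ m) (x y g : Fin 3) (j lm l : ZMod m) (e1 : lm = l - 1)
    (hlj : Far m l j) :
    (V K m x l * V K m y j) * (V K m g lm * V K m g l) ∈ Jabc K m := by
  subst e1
  by_cases hx : x = g
  · rw [hx]
    refine rwJ (memI1 g y hlj) (dP1 g (l-1) l rfl) ?_
    refine Jeq (show _ = V K m y j * (V K m (o1 g) l * V K m (o2 g) l * V K m g l) from by ring) ?_
    exact LT hm y (o1 g) (o2 g) g j l (o12_ne g) (o1_ne g).symm (o2_ne g).symm (far_symm hlj)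
  by_cases hj : j = l + 2
  · by_cases hy : y = g
    · subst hj
      rw [hy]
      refine rwJ (memI1 x g hlj) (dP3 g (l-1) l (l+1) rfl rfl) ?_
      refine Jeq (show _ = (V K m x l * V K m g (l+1)) * (V K m g (l+1) * V K m g (l+2))
        from by ring) ?_
      refine T3 (r := V K m x (l+4) * V K m g (l+4+1)) (s := V K m g (l+3)^2)
        (memI2 hx l (l+4)) (Meq (by ring)
        (neg_mem (dSq g (l+1) (l+2) (l+3) (by ring) (by ring)))) ?_ ?_ ?_
      · refine Jeq (show _ = (V K m x l * V K m g (l+3)) * (V K m g (l+1) * V K m g (l+3))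
          from by ring) (I2J (memI1 x g ?_) (memI1 g g ?_))
        · exact far_of hm 3 (by norm_num) (by norm_num) (by push_cast; ring)
        · exact far_of hm 2 (by norm_num) (by norm_num) (by push_cast; ring)
      · refine Jeq (show _ = (V K m x (l+4) * V K m g (l+1)) * (V K m g (l+4+1) * V K m g (l+2))
          from by ring) (I2J (memI1 x g ?_) (memI1 g g ?_))
        · exact far_of_neg hm 3 (by norm_num) (by norm_num) (by push_cast; ring)
        · exact far_of_neg hm 3 (by norm_num) (by norm_num) (by push_cast; ring)
      · refine Jeq (show _ = (V K m g (l+4+1) * V K m g (l+3)) * (V K m g (l+3) * V K m x (l+4))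
          from by ring) ?_
        refine L2 hm g g g x (l+4+1) (l+3) (l+3) (l+4) (by ring) (fun h => hx h.symm) ?_
        exact far_of_neg hm 2 (by norm_num) (by norm_num) (by push_cast; ring)
    · subst hj
      refine rwJ (memI1 x y hlj) (dP3 g (l-1) l (l+1) rfl rfl) ?_
      refine Jeq (show _ = (V K m x l * V K m g (l+1)) * (V K m g (l+1) * V K m y (l+2))
        from by ring) ?_
      exact L3 hm x g g y l (l+1) (l+1) (l+2) rfl (by ring) hx (fun h => hy h.symm)
  · refine rwJ (memI1 x y hlj) (dP3 g (l-1) l (l+1) rfl rfl) ?_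
    refine Jeq (show _ = (V K m y j * V K m g (l+1)) * (V K m x l * V K m g (l+1))
      from by ring) ?_
    refine L2 hm y g x g j (l+1) l (l+1) rfl hx ?_
    exact ⟨fun hh => hj (by linear_combination -hh),
           fun hh => hlj.2.2 (by linear_combination -hh),
           fun hh => hlj.2.1 (by linear_combination -hh)⟩

/-- far·class, case `i = l-1, j = l+1`. -/
lemma L4F3 (hm : 6 ≤ m) (x y g : Fin 3) (lm l lp : ZMod m)
    (e1 : lm = l - 1) (e2 : lp = l + 1) :
    (V K m x lm * V K m y lp) * (V K m g lm * V K m g l) ∈ Jabc K m := by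
  subst e1; subst e2
  by_cases hx : x = g
  · rw [hx]
    refine rwJ (memI1 g y (far_of hm 2 (by norm_num) (by norm_num) (by push_cast; ring)))
      (dP1 g (l-1) l rfl) ?_
    by_cases hy : y = o1 g
    · refine Jeq (show _ = (V K m g (l-1) * V K m (o1 g) l) * (V K m (o2 g) l * V K m y (l+1))
        from by ring) ?_
      refine L3 hm g (o1 g) (o2 g) y (l-1) l l (l+1) (by ring) rfl (o1_ne g) ?_
      rw [hy]; exact Ne.symm (o12_ne g)
    · refine Jeq (show _ = (V K m g (l-1) * V K m (o2 g) l) * (V K m (o1 g) l * V K m y (l+1))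
        from by ring) ?_
      refine L3 hm g (o2 g) (o1 g) y (l-1) l l (l+1) (by ring) rfl (o2_ne g) ?_
      exact fun h => hy h.symm
  · refine Jeq (show _ = (V K m y (l+1) * V K m g (l-1)) * (V K m x (l-1) * V K m g l)
      from by ring) ?_
    refine L2 hm y g x g (l+1) (l-1) (l-1) l (by ring) hx ?_
    exact far_of_neg hm 2 (by norm_num) (by norm_num) (by push_cast; ring)

/-- far·class, case `i = l-1, j = l+2`. -/
lemma L4F5 (hm : 6 ≤ m) (x y g : Fin 3) (lm l p2 : ZMod m)
    (e1 : lm = l - 1) (e3 : p2 = l + 2) :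
    (V K m x lm * V K m y p2) * (V K m g lm * V K m g l) ∈ Jabc K m := by
  subst e1; subst e3
  by_cases hx : x = g
  · rw [hx]
    by_cases hy : y = g
    · rw [hy]
      refine rwJ (memI1 g g (far_of hm 3 (by norm_num) (by norm_num) (by push_cast; ring)))
        (dP1 g (l-1) l rfl) ?_
      refine Jeq (show _ = (V K m g (l+2) * V K m (o2 g) l) * (V K m g (l-1) * V K m (o1 g) l)
        from by ring) ?_
      refine L2 hm g (o2 g) g (o1 g) (l+2) l (l-1) l (by ring) (o1_ne g) ?_
      exact far_of_neg hm 2 (by norm_num) (by norm_num) (by push_cast; ring)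
    · refine rwJ (memI1 g y (far_of hm 3 (by norm_num) (by norm_num) (by push_cast; ring)))
        (dP3 g (l-1) l (l+1) rfl rfl) ?_
      refine Jeq (show _ = (V K m g (l-1) * V K m g (l+1)) * (V K m g (l+1) * V K m y (l+2))
        from by ring) ?_
      refine L2 hm g g g y (l-1) (l+1) (l+1) (l+2) (by ring) (fun h => hy h.symm) ?_
      exact far_of hm 2 (by norm_num) (by norm_num) (by push_cast; ring)
  · refine Jeq (show _ = (V K m y (l+2) * V K m g (l-1)) * (V K m x (l-1) * V K m g l)
      from by ring) ?_
    refine L2 hm y g x g (l+2) (l-1) (l-1) l (by ring) hx ?_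
    exact far_of_neg hm 3 (by norm_num) (by norm_num) (by push_cast; ring)

end EGH

namespace EGH

variable {K : Type*} [Field K] {m : ℕ}

/-- far · class (canonical `P2` shape): the main workhorse. -/
lemma L4c (hm : 6 ≤ m) (x y g : Fin 3) (i j lm l : ZMod m) (e1 : lm = l - 1)
    (hij : Far m i j) :
    (V K m x i * V K m y j) * (V K m g lm * V K m g l) ∈ Jabc K m := by
  subst e1
  by_cases hi : i = l
  · rw [hi] at hij ⊢; exact L4zero hm x y g j (l-1) l rfl hij
  by_cases hj : j = l
  · rw [hj] at hij ⊢
    exact Jeq (by ring) (L4zero hm y x g i (l-1) l rfl (far_symm hij))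
  by_cases hA : i = l - 1 ∧ j = l + 1
  · rw [hA.1, hA.2]; exact L4F3 hm x y g (l-1) l (l+1) rfl rfl
  by_cases hB : i = l + 1 ∧ j = l - 1
  · rw [hB.1, hB.2]
    exact Jeq (by ring) (L4F3 hm y x g (l-1) l (l+1) rfl rfl)
  by_cases hC : i = l - 1 ∧ j = l + 2
  · rw [hC.1, hC.2]; exact L4F5 hm x y g (l-1) l (l+2) rfl rfl
  by_cases hD : i = l + 2 ∧ j = l - 1
  · rw [hD.1, hD.2]
    exact Jeq (by ring) (L4F5 hm y x g (l-1) l (l+2) rfl rfl)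
  by_cases hi1 : i = l - 1
  · -- j ∉ {l-2,…,l+2}; P3 route, (x_{l-1} g_{l+1}) (y_j g_{l+1}) far far
    have hjl1 : j ≠ l + 1 := fun h => hA ⟨hi1, h⟩
    have hjl2 : j ≠ l + 2 := fun h => hC ⟨hi1, h⟩
    rw [hi1] at hij ⊢
    refine rwJ (memI1 x y hij) (dP3 g (l-1) l (l+1) rfl rfl) ?_
    refine Jeq (show _ = (V K m x (l-1) * V K m g (l+1)) * (V K m y j * V K m g (l+1))
      from by ring) (I2J (memI1 x g ?_) (memI1 y g ?_))
    · exact far_of hm 2 (by norm_num) (by norm_num) (by push_cast; ring)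
    · exact ⟨fun hh => hjl2 (by linear_combination -hh),
        fun hh => hjl1 (by linear_combination -hh),
        fun hh => hj (by linear_combination -hh)⟩
  by_cases hi2 : i = l + 1
  · -- direct pairing (x_i g_{l-1}) (y_j g_l)
    have hjm1 : j ≠ l - 1 := fun h => hB ⟨hi2, h⟩
    have hjp1 : j ≠ l + 1 := fun h => hij.2.1 (h.trans hi2.symm)
    rw [hi2] at hij ⊢
    refine Jeq (show _ = (V K m x (l+1) * V K m g (l-1)) * (V K m y j * V K m g l)
      from by ring) (I2J (memI1 x g ?_) (memI1 y g ?_))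
    · exact far_of_neg hm 2 (by norm_num) (by norm_num) (by push_cast; ring)
    · exact ⟨fun hh => hjp1 (by linear_combination -hh),
        fun hh => hj (by linear_combination -hh),
        fun hh => hjm1 (by linear_combination -hh)⟩
  by_cases hi3 : i = l - 2
  · rw [hi3] at hij ⊢
    by_cases hj1 : j = l + 1
    · -- pairing (x_i g_l)(y_j g_{l-1})
      rw [hj1]
      refine Jeq (show _ = (V K m x (l-2) * V K m g l) * (V K m y (l+1) * V K m g (l-1))
        from by ring) (I2J (memI1 x g ?_) (memI1 y g ?_))
      · exact far_of hm 2 (by norm_num) (by norm_num) (by push_cast; ring)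
      · exact far_of_neg hm 2 (by norm_num) (by norm_num) (by push_cast; ring)
    by_cases hj2 : j = l + 2
    · rw [hj2]
      refine Jeq (show _ = (V K m x (l-2) * V K m g l) * (V K m y (l+2) * V K m g (l-1))
        from by ring) (I2J (memI1 x g ?_) (memI1 y g ?_))
      · exact far_of hm 2 (by norm_num) (by norm_num) (by push_cast; ring)
      · exact far_of_neg hm 3 (by norm_num) (by norm_num) (by push_cast; ring)
    · -- P3 route far far
      refine rwJ (memI1 x y hij) (dP3 g (l-1) l (l+1) rfl rfl) ?_
      refine Jeq (show _ = (V K m x (l-2) * V K m g (l+1)) * (V K m y j * V K m g (l+1))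
        from by ring) (I2J (memI1 x g ?_) (memI1 y g ?_))
      · exact far_of hm 3 (by norm_num) (by norm_num) (by push_cast; ring)
      · exact ⟨fun hh => hj2 (by linear_combination -hh),
          fun hh => hj1 (by linear_combination -hh),
          fun hh => hj (by linear_combination -hh)⟩
  by_cases hi4 : i = l + 2
  · rw [hi4] at hij ⊢
    by_cases hj2 : j = l + 1
    · rw [hj2]
      refine Jeq (show _ = (V K m x (l+2) * V K m g l) * (V K m y (l+1) * V K m g (l-1))
        from by ring) (I2J (memI1 x g ?_) (memI1 y g ?_))
      · exact far_of_neg hm 2 (by norm_num) (by norm_num) (by push_cast; ring)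
      · exact far_of_neg hm 2 (by norm_num) (by norm_num) (by push_cast; ring)
    · have hjm1 : j ≠ l - 1 := fun h => hD ⟨hi4, h⟩
      refine Jeq (show _ = (V K m x (l+2) * V K m g (l-1)) * (V K m y j * V K m g l)
        from by ring) (I2J (memI1 x g ?_) (memI1 y g ?_))
      · exact far_of_neg hm 3 (by norm_num) (by norm_num) (by push_cast; ring)
      · exact ⟨fun hh => hj2 (by linear_combination -hh),
          fun hh => hj (by linear_combination -hh),
          fun hh => hjm1 (by linear_combination -hh)⟩
  -- i ∉ {l-2, l-1, l, l+1, l+2}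
  · have fiM : Far m i (l-1) :=
      ⟨fun hh => hi (by linear_combination -hh),
       fun hh => hi1 (by linear_combination -hh),
       fun hh => hi3 (by linear_combination -hh)⟩
    have fi0 : Far m i l :=
      ⟨fun hh => hi2 (by linear_combination -hh),
       fun hh => hi (by linear_combination -hh),
       fun hh => hi1 (by linear_combination -hh)⟩
    have fiP : Far m i (l+1) :=
      ⟨fun hh => hi4 (by linear_combination -hh),
       fun hh => hi2 (by linear_combination -hh),
       fun hh => hi (by linear_combination -hh)⟩
    by_cases hj3 : j = l - 1
    · -- P3 route: (x_i g_{l+1}) far, (y_{l-1} g_{l+1}) far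
      rw [hj3] at hij ⊢
      refine rwJ (memI1 x y hij) (dP3 g (l-1) l (l+1) rfl rfl) ?_
      refine Jeq (show _ = (V K m x i * V K m g (l+1)) * (V K m y (l-1) * V K m g (l+1))
        from by ring) (I2J (memI1 x g fiP) (memI1 y g ?_))
      exact far_of hm 2 (by norm_num) (by norm_num) (by push_cast; ring)
    by_cases hj4 : j = l + 1
    · rw [hj4]
      refine Jeq (show _ = (V K m x i * V K m g l) * (V K m y (l+1) * V K m g (l-1))
        from by ring) (I2J (memI1 x g fi0) (memI1 y g ?_))
      exact far_of_neg hm 2 (by norm_num) (by norm_num) (by push_cast; ring)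
    · refine Jeq (show _ = (V K m x i * V K m g (l-1)) * (V K m y j * V K m g l)
        from by ring) (I2J (memI1 x g fiM) (memI1 y g ?_))
      exact ⟨fun hh => hj4 (by linear_combination -hh),
        fun hh => hj (by linear_combination -hh),
        fun hh => hj3 (by linear_combination -hh)⟩

/-- far · same-index pair. -/
lemma L4a (hm : 6 ≤ m) (x y z w : Fin 3) (i j l : ZMod m) (hij : Far m i j) (hzw : z ≠ w) :
    (V K m x i * V K m y j) * (V K m z l * V K m w l) ∈ Jabc K m := by
  refine rwJ (memI1 x y hij) (memI4 (z := oth z w) hzw (Ne.symm (oth_ne1 hzw))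
    (Ne.symm (oth_ne2 hzw)) l) ?_
  exact L4c hm x y (oth z w) i j (l-1) l rfl hij

/-- far · square. -/
lemma L4b (hm : 6 ≤ m) (x y g : Fin 3) (i j l lp : ZMod m) (e2 : lp = l + 1)
    (hij : Far m i j) :
    (V K m x i * V K m y j) * (V K m g lp)^2 ∈ Jabc K m := by
  subst e2
  have h := rwJ (q := (V K m g (l+1))^2) (q' := V K m g (l-1) * V K m g l)
    (memI1 x y hij) (dSq g (l-1) l (l+1) rfl rfl)
    (L4c hm x y g i j (l-1) l rfl hij)
  exact Jeq (by ring) h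

/-- far · same-letter consecutive pair. -/
lemma L4sl (hm : 6 ≤ m) (x y g : Fin 3) (i j p pp : ZMod m) (e : pp = p + 1)
    (hij : Far m i j) :
    (V K m x i * V K m y j) * (V K m g p * V K m g pp) ∈ Jabc K m := by
  subst e
  exact L4c hm x y g i j p (p+1) (by ring) hij

end EGH

namespace EGH

variable {K : Type*} [Field K] {m : ℕ}

/-- cross · class: core lemma. `q2` is any element whose difference with the
canonical `P2` representative `g_{l-1} g_l` lies in `I`. -/
lemma L5core (hm : 6 ≤ m) (u v g : Fin 3) (s sp lm l : ZMod m)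
    (hsp : sp = s + 1) (elm : lm = l - 1) (huv : u ≠ v)
    (q2 : MvPolynomial (Fin 3 × ZMod m) K)
    (h2 : q2 - (V K m g lm * V K m g l) ∈ Iabc K m)
    (hb : (V K m u (l+3) * V K m v (l+3+1)) * q2 ∈ Jabc K m) :
    (V K m u s * V K m v sp) * q2 ∈ Jabc K m := by
  subst hsp; subst elm
  by_cases c1 : s = l - 2
  · subst c1
    refine T3 (r := V K m u (l+3) * V K m v (l+3+1)) (s := (V K m g (l+1))^2)
      (memI2 huv (l-2) (l+3))
      (Meq (by ring) (add_mem h2 (dP3 g (l-1) l (l+1) rfl rfl))) ?_ hb ?_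
    · refine Jeq (show _ = (V K m u (l-2) * V K m g (l+1)) * (V K m v (l-2+1) * V K m g (l+1))
        from by ring) (I2J (memI1 u g ?_) (memI1 v g ?_))
      · exact far_of hm 3 (by norm_num) (by norm_num) (by push_cast; ring)
      · exact far_of hm 2 (by norm_num) (by norm_num) (by push_cast; ring)
    · refine Jeq (show _ = (V K m u (l+3) * V K m g (l+1)) * (V K m v (l+3+1) * V K m g (l+1))
        from by ring) (I2J (memI1 u g ?_) (memI1 v g ?_))
      · exact far_of_neg hm 2 (by norm_num) (by norm_num) (by push_cast; ring)
      · exact far_of_neg hm 3 (by norm_num) (by norm_num) (by push_cast; ring)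
  by_cases c2 : s = l - 1
  · subst c2
    refine T3 (r := V K m u (l+3) * V K m v (l+3+1)) (s := (V K m g (l+1))^2)
      (memI2 huv (l-1) (l+3))
      (Meq (by ring) (add_mem h2 (dP3 g (l-1) l (l+1) rfl rfl))) ?_ hb ?_
    · by_cases hv : v = g
      · rw [hv]
        refine Jeq (show _ = (V K m u (l-1) * V K m g (l+1)) * (V K m g (l-1+1) * V K m g (l+1))
          from by ring) ?_
        refine L4sl hm u g g (l-1) (l+1) (l-1+1) (l+1) (by ring) ?_
        exact far_of hm 2 (by norm_num) (by norm_num) (by push_cast; ring)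
      · refine Jeq (show _ = (V K m u (l-1) * V K m g (l+1)) * (V K m v (l-1+1) * V K m g (l+1))
          from by ring) ?_
        refine L2 hm u g v g (l-1) (l+1) (l-1+1) (l+1) (by ring) hv ?_
        exact far_of hm 2 (by norm_num) (by norm_num) (by push_cast; ring)
    · refine Jeq (show _ = (V K m u (l+3) * V K m g (l+1)) * (V K m v (l+3+1) * V K m g (l+1))
        from by ring) (I2J (memI1 u g ?_) (memI1 v g ?_))
      · exact far_of_neg hm 2 (by norm_num) (by norm_num) (by push_cast; ring)
      · exact far_of_neg hm 3 (by norm_num) (by norm_num) (by push_cast; ring)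
  by_cases c3 : s = l
  · subst c3
    refine T3 (r := V K m u (s+3) * V K m v (s+3+1)) (s := V K m g (s-1) * V K m g s)
      (memI2 huv s (s+3)) h2 ?_ hb ?_
    · by_cases hu : u = g
      · rw [hu]
        refine Jeq (show _ = (V K m v (s+1) * V K m g (s-1)) * (V K m g s)^2
          from by ring) ?_
        refine L4b hm v g g (s+1) (s-1) (s-1) s (by ring) ?_
        exact far_of_neg hm 2 (by norm_num) (by norm_num) (by push_cast; ring)
      · refine Jeq (show _ = (V K m v (s+1) * V K m g (s-1)) * (V K m u s * V K m g s)
          from by ring) ?_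
        refine L4a hm v g u g (s+1) (s-1) s ?_ hu
        exact far_of_neg hm 2 (by norm_num) (by norm_num) (by push_cast; ring)
    · refine Jeq (show _ = (V K m u (s+3) * V K m g (s-1)) * (V K m v (s+3+1) * V K m g s)
        from by ring) (I2J (memI1 u g ?_) (memI1 v g ?_))
      · exact far_of_neg hm 4 (by norm_num) (by norm_num) (by push_cast; ring)
      · exact far_of_neg hm 4 (by norm_num) (by norm_num) (by push_cast; ring)
  · refine T3 (r := V K m u (l+3) * V K m v (l+3+1)) (s := V K m g (l-1) * V K m g l)
      (memI2 huv s (l+3)) h2 ?_ hb ?_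
    · refine Jeq (show _ = (V K m u s * V K m g (l-1)) * (V K m v (s+1) * V K m g l)
        from by ring) (I2J (memI1 u g ?_) (memI1 v g ?_))
      · exact ⟨fun hh => c3 (by linear_combination -hh),
          fun hh => c2 (by linear_combination -hh),
          fun hh => c1 (by linear_combination -hh)⟩
      · exact ⟨fun hh => c3 (by linear_combination -hh),
          fun hh => c2 (by linear_combination -hh),
          fun hh => c1 (by linear_combination -hh)⟩
    · refine Jeq (show _ = (V K m u (l+3) * V K m g (l-1)) * (V K m v (l+3+1) * V K m g l)
        from by ring) (I2J (memI1 u g ?_) (memI1 v g ?_))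
      · exact far_of_neg hm 4 (by norm_num) (by norm_num) (by push_cast; ring)
      · exact far_of_neg hm 4 (by norm_num) (by norm_num) (by push_cast; ring)

end EGH

namespace EGH

variable {K : Type*} [Field K] {m : ℕ}

/-- cross · same-index pair. -/
lemma L5a (hm : 6 ≤ m) (u v z w : Fin 3) (s sp l : ZMod m) (hsp : sp = s + 1)
    (huv : u ≠ v) (hzw : z ≠ w) :
    (V K m u s * V K m v sp) * (V K m z l * V K m w l) ∈ Jabc K m := by
  refine L5core hm u v (oth z w) s sp (l-1) l hsp rfl huv _
    (memI4 (z := oth z w) hzw (Ne.symm (oth_ne1 hzw)) (Ne.symm (oth_ne2 hzw)) l) ?_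
  refine Jeq (show _ = (V K m u (l+3) * V K m z l) * (V K m v (l+3+1) * V K m w l)
    from by ring) (I2J (memI1 u z ?_) (memI1 v w ?_))
  · exact far_of_neg hm 3 (by norm_num) (by norm_num) (by push_cast; ring)
  · exact far_of_neg hm 4 (by norm_num) (by norm_num) (by push_cast; ring)

/-- cross · same-letter consecutive pair. -/
lemma L5b (hm : 6 ≤ m) (u v g : Fin 3) (s sp p pp : ZMod m) (hsp : sp = s + 1)
    (e : pp = p + 1) (huv : u ≠ v) :
    (V K m u s * V K m v sp) * (V K m g p * V K m g pp) ∈ Jabc K m := by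
  refine L5core hm u v g s sp p pp hsp (by rw [e]; ring) huv _
    (Meq (by ring) (zero_mem _)) ?_
  refine Jeq (show _ = (V K m u (pp+3) * V K m g p) * (V K m v (pp+3+1) * V K m g pp)
    from by ring) (I2J (memI1 u g ?_) (memI1 v g ?_))
  · exact far_of_neg hm 4 (by norm_num) (by norm_num) (by push_cast; rw [e]; ring)
  · exact far_of_neg hm 4 (by norm_num) (by norm_num) (by push_cast; ring)

/-- cross · square. -/
lemma L5c (hm : 6 ≤ m) (u v g : Fin 3) (s sp p : ZMod m) (hsp : sp = s + 1)
    (huv : u ≠ v) :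
    (V K m u s * V K m v sp) * (V K m g p)^2 ∈ Jabc K m := by
  refine L5core hm u v g s sp (p-2) (p-1) hsp (by ring) huv _
    (dSq g (p-2) (p-1) p (by ring) (by ring)) ?_
  refine Jeq (show _ = (V K m u (p-1+3) * V K m g p) * (V K m v (p-1+3+1) * V K m g p)
    from by ring) (I2J (memI1 u g ?_) (memI1 v g ?_))
  · exact far_of_neg hm 2 (by norm_num) (by norm_num) (by push_cast; ring)
  · exact far_of_neg hm 3 (by norm_num) (by norm_num) (by push_cast; ring)

end EGH

namespace EGH

variable {K : Type*} [Field K] {m : ℕ}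

lemma dP1sq (g : Fin 3) (lm l : ZMod m) (e : lm = l - 1) :
    (V K m g l)^2 - V K m (o1 g) lm * V K m (o2 g) lm ∈ Iabc K m := by
  subst e
  have h := memI3 (K := K) (x := g) (y := o1 g) (z := o2 g)
    (o1_ne g) (o2_ne g) (o12_ne g) (l-1)
  rwa [show l - 1 + 1 = l from by ring] at h

/-- local: `g_l² d_l e_l`. -/
lemma TH1 (hm : 6 ≤ m) (g d e : Fin 3) (l : ZMod m)
    (hgd : g ≠ d) (hge : g ≠ e) (hde : d ≠ e) :
    (V K m g l)^2 * (V K m d l * V K m e l) ∈ Jabc K m := by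
  refine Jeq (show _ = (V K m g l * V K m d l) * (V K m g l * V K m e l) from by ring) ?_
  refine T3 (r := V K m e (l-1) * V K m e l) (s := (V K m d (l+1))^2)
    (memI4 (x := g) (y := d) (z := e) hgd hge hde l)
    (Meq (by ring) (neg_mem (memI3 (x := d) (y := g) (z := e)
      (Ne.symm hgd) hde hge l))) ?_ ?_ ?_
  · refine Jeq (show _ = (V K m g l * V K m d (l+1)) * (V K m d l * V K m d (l+1))
      from by ring) ?_
    exact L5b hm g d d l (l+1) l (l+1) rfl rfl hgd
  · refine Jeq (show _ = (V K m e (l-1) * V K m g l) * (V K m e l)^2 from by ring) ?_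
    exact L5c hm e g e (l-1) l l (by ring) (Ne.symm hge)
  · refine Jeq (show _ = (V K m e (l-1) * V K m d (l+1)) * (V K m e l * V K m d (l+1))
      from by ring) ?_
    refine L2 hm e d e d (l-1) (l+1) l (l+1) rfl (Ne.symm hde) ?_
    exact far_of hm 2 (by norm_num) (by norm_num) (by push_cast; ring)

/-- local: `g_l² d_l²`. -/
lemma TH2 (hm : 6 ≤ m) (g d : Fin 3) (l : ZMod m) (hgd : g ≠ d) :
    (V K m g l)^2 * (V K m d l)^2 ∈ Jabc K m := by
  set e := oth g d with he
  have hge : g ≠ e := Ne.symm (oth_ne1 hgd)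
  have hde : d ≠ e := Ne.symm (oth_ne2 hgd)
  refine Jeq (show _ = (V K m g l * V K m d l) * (V K m g l * V K m d l) from by ring) ?_
  refine T3 (r := V K m e (l-1) * V K m e l) (s := (V K m e (l+1))^2)
    (memI4 (x := g) (y := d) (z := e) hgd hge hde l)
    (Meq (by ring) (neg_mem (memI3 (x := e) (y := g) (z := d)
      (Ne.symm hge) (Ne.symm hde) hgd l))) ?_ ?_ ?_
  · refine Jeq (show _ = (V K m g l * V K m e (l+1)) * (V K m d l * V K m e (l+1))
      from by ring) ?_
    exact L3 hm g e d e l (l+1) l (l+1) rfl rfl hge hde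
  · refine Jeq (show _ = (V K m e (l-1) * V K m g l) * (V K m e l * V K m d l)
      from by ring) ?_
    exact L5a hm e g e d (l-1) l l (by ring) (Ne.symm hge) (Ne.symm hde)
  · have hc0 := cubeJ (K := K) (m := m) e (l-1)
    rw [show l - 1 + 1 = l from by ring, show l - 1 + 2 = l + 1 from by ring] at hc0
    exact Jeq (by ring) hc0

/-- local: `g_l⁴`. -/
lemma TH3 (hm : 6 ≤ m) (g : Fin 3) (l : ZMod m) :
    (V K m g l)^2 * (V K m g l)^2 ∈ Jabc K m := by
  refine T3 (r := V K m (o1 g) (l-1) * V K m (o2 g) (l-1)) (s := V K m g (l-2) * V K m g (l-1))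
    (dP1sq g (l-1) l rfl) (dSq g (l-2) (l-1) l (by ring) (by ring)) ?_ ?_ ?_
  · refine Jeq (show _ = (V K m g (l-2) * V K m g l) * (V K m g (l-1) * V K m g l)
      from by ring) ?_
    refine L4sl hm g g g (l-2) l (l-1) l (by ring) ?_
    exact far_of hm 2 (by norm_num) (by norm_num) (by push_cast; ring)
  · refine Jeq (show _ = (V K m (o1 g) (l-1) * V K m g l) * (V K m (o2 g) (l-1) * V K m g l)
      from by ring) ?_
    exact L3 hm (o1 g) g (o2 g) g (l-1) l (l-1) l (by ring) (by ring) (Ne.symm (o1_ne g)) (Ne.symm (o2_ne g))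
  · refine Jeq (show _ = (V K m g (l-2) * V K m (o1 g) (l-1)) * (V K m (o2 g) (l-1) * V K m g (l-1))
      from by ring) ?_
    exact L5a hm g (o1 g) (o2 g) g (l-2) (l-1) (l-1) (by ring) (o1_ne g) (Ne.symm (o2_ne g))
  
/-- local: `g_l³ d_l`. -/
lemma TH4 (hm : 6 ≤ m) (g d : Fin 3) (l : ZMod m) (hgd : g ≠ d) :
    (V K m g l)^2 * (V K m g l * V K m d l) ∈ Jabc K m := by
  set e := oth g d with he
  have hge : g ≠ e := Ne.symm (oth_ne1 hgd)
  have hde : d ≠ e := Ne.symm (oth_ne2 hgd)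
  refine T3 (r := V K m g (l-2) * V K m g (l-1)) (s := V K m e (l-1) * V K m e l)
    (dSq g (l-2) (l-1) l (by ring) (by ring))
    (memI4 (x := g) (y := d) (z := e) hgd hge hde l) ?_ ?_ ?_
  · refine Jeq (show _ = (V K m e (l-1) * V K m g l) * (V K m e l * V K m g l)
      from by ring) ?_
    exact L5a hm e g e g (l-1) l l (by ring) (Ne.symm hge) (Ne.symm hge)
  · refine Jeq (show _ = (V K m g (l-2) * V K m g l) * (V K m g (l-1) * V K m d l)
      from by ring) ?_
    refine L2 hm g g g d (l-2) l (l-1) l (by ring) hgd ?_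
    exact far_of hm 2 (by norm_num) (by norm_num) (by push_cast; ring)
  · refine Jeq (show _ = (V K m g (l-2) * V K m e l) * (V K m g (l-1) * V K m e (l-1))
      from by ring) ?_
    refine L4a hm g e g e (l-2) l (l-1) ?_ hge
    exact far_of hm 2 (by norm_num) (by norm_num) (by push_cast; ring)

/-- local: `g_l³ g_{l+1}`. -/
lemma TH5 (hm : 6 ≤ m) (g : Fin 3) (l lp : ZMod m) (e : lp = l + 1) :
    (V K m g l)^2 * (V K m g l * V K m g lp) ∈ Jabc K m := by
  subst e
  refine T3 (r := V K m (o1 g) (l-1) * V K m (o2 g) (l-1))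
    (s := V K m (o1 g) (l+1) * V K m (o2 g) (l+1))
    (dP1sq g (l-1) l rfl) (dP1 g l (l+1) (by ring)) ?_ ?_ ?_
  · refine Jeq (show _ = (V K m g l * V K m (o1 g) (l+1)) * (V K m g l * V K m (o2 g) (l+1))
      from by ring) ?_
    exact L3 hm g (o1 g) g (o2 g) l (l+1) l (l+1) rfl rfl (o1_ne g) (o2_ne g)
  · refine Jeq (show _ = (V K m (o2 g) (l-1) * V K m g (l+1)) * (V K m (o1 g) (l-1) * V K m g l)
      from by ring) ?_
    refine L2 hm (o2 g) g (o1 g) g (l-1) (l+1) (l-1) l (by ring) (Ne.symm (o1_ne g)) ?_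
    exact far_of hm 2 (by norm_num) (by norm_num) (by push_cast; ring)
  · refine Jeq (show _ = (V K m (o1 g) (l-1) * V K m (o2 g) (l+1)) *
      (V K m (o2 g) (l-1) * V K m (o1 g) (l+1)) from by ring)
      (I2J (memI1 (o1 g) (o2 g) ?_) (memI1 (o2 g) (o1 g) ?_))
    · exact far_of hm 2 (by norm_num) (by norm_num) (by push_cast; ring)
    · exact far_of hm 2 (by norm_num) (by norm_num) (by push_cast; ring)

/-- local: `g_l² g_{l+1}²` (as pair·pair). -/
lemma TH7 (hm : 6 ≤ m) (g : Fin 3) (l lp : ZMod m) (e : lp = l + 1) :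
    (V K m g l * V K m g lp) * (V K m g l * V K m g lp) ∈ Jabc K m := by
  subst e
  refine T3 (r := V K m (o1 g) (l+1) * V K m (o2 g) (l+1)) (s := (V K m g (l+2))^2)
    (dP1 g l (l+1) (by ring)) (dP3 g l (l+1) (l+2) (by ring) (by ring)) ?_ ?_ ?_
  · exact Jeq (by ring) (cubeJ g l)
  · refine Jeq (show _ = (V K m g l * V K m (o1 g) (l+1)) * (V K m (o2 g) (l+1) * V K m g (l+1))
      from by ring) ?_
    exact L5a hm g (o1 g) (o2 g) g l (l+1) (l+1) rfl (o1_ne g) (Ne.symm (o2_ne g))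
  · refine Jeq (show _ = (V K m (o1 g) (l+1) * V K m g (l+2)) * (V K m (o2 g) (l+1) * V K m g (l+2))
      from by ring) ?_
    exact L3 hm (o1 g) g (o2 g) g (l+1) (l+2) (l+1) (l+2) (by ring) (by ring)
      (Ne.symm (o1_ne g)) (Ne.symm (o2_ne g))

/-- local: `g_l g_{l+1}³`. -/
lemma TH6 (hm : 6 ≤ m) (g : Fin 3) (l lp : ZMod m) (e : lp = l + 1) :
    (V K m g l * V K m g lp) * (V K m g lp)^2 ∈ Jabc K m := by
  subst e
  refine T3 (r := V K m (o1 g) (l+1) * V K m (o2 g) (l+1))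
    (s := V K m (o1 g) l * V K m (o2 g) l)
    (dP1 g l (l+1) (by ring)) (dP1sq g l (l+1) (by ring)) ?_ ?_ ?_
  · refine Jeq (show _ = (V K m (o1 g) l * V K m g (l+1)) * (V K m (o2 g) l * V K m g l)
      from by ring) ?_
    exact L5a hm (o1 g) g (o2 g) g l (l+1) l rfl (Ne.symm (o1_ne g)) (Ne.symm (o2_ne g))
  · refine Jeq (show _ = (V K m g (l+1))^2 * (V K m (o1 g) (l+1) * V K m (o2 g) (l+1))
      from by ring) ?_
    exact TH1 hm g (o1 g) (o2 g) (l+1) (o1_ne g) (o2_ne g) (o12_ne g)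
  · refine Jeq (show _ = (V K m (o1 g) l * V K m (o2 g) (l+1)) * (V K m (o2 g) l * V K m (o1 g) (l+1))
      from by ring) ?_
    exact L3 hm (o1 g) (o2 g) (o2 g) (o1 g) l (l+1) l (l+1) rfl rfl
      (o12_ne g) (Ne.symm (o12_ne g))

end EGH

namespace EGH

variable {K : Type*} [Field K] {m : ℕ}

/-- B·B. -/
lemma L6x1 (hm : 6 ≤ m) (g h : Fin 3) (p pp q qq : ZMod m)
    (e1 : pp = p + 1) (e2 : qq = q + 1) :
    (V K m g p * V K m g pp) * (V K m h q * V K m h qq) ∈ Jabc K m := by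
  subst e1; subst e2
  by_cases c0 : q = p
  · subst c0
    by_cases hgh : g = h
    · rw [hgh]; exact TH7 hm h q (q+1) rfl
    · refine Jeq (show _ = (V K m g q * V K m h (q+1)) * (V K m h q * V K m g (q+1))
        from by ring) ?_
      exact L3 hm g h h g q (q+1) q (q+1) rfl rfl hgh (Ne.symm hgh)
  by_cases c1 : q = p + 1
  · subst c1
    by_cases hgh : g = h
    · rw [← hgh]
      refine Jeq (show _ = (V K m g p * V K m g (p+2)) * (V K m g (p+1))^2 from by ring) ?_
      refine L4b hm g g g p (p+2) p (p+1) rfl ?_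
      exact far_of hm 2 (by norm_num) (by norm_num) (by push_cast; ring)
    · refine Jeq (show _ = (V K m g p * V K m h (p+1+1)) * (V K m g (p+1) * V K m h (p+1))
        from by ring) ?_
      refine L4a hm g h g h p (p+1+1) (p+1) ?_ hgh
      exact far_of hm 2 (by norm_num) (by norm_num) (by push_cast; ring)
  by_cases c2 : q = p - 1
  · subst c2
    rw [show p - 1 + 1 = p from by ring]
    by_cases hgh : g = h
    · rw [← hgh]
      refine Jeq (show _ = (V K m g (p-1) * V K m g (p+1)) * (V K m g p)^2 from by ring) ?_
      refine L4b hm g g g (p-1) (p+1) (p-1) p (by ring) ?_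
      exact far_of hm 2 (by norm_num) (by norm_num) (by push_cast; ring)
    · refine Jeq (show _ = (V K m g (p+1) * V K m h (p-1)) * (V K m g p * V K m h p)
        from by ring) ?_
      refine L4a hm g h g h (p+1) (p-1) p ?_ hgh
      exact far_of_neg hm 2 (by norm_num) (by norm_num) (by push_cast; ring)
  · refine Jeq (show _ = (V K m g p * V K m h q) * (V K m g (p+1) * V K m h (q+1))
      from by ring) (I2J (memI1 g h ?_) (memI1 g h ?_))
    · exact ⟨fun hh => c2 (by linear_combination hh),
        fun hh => c0 (by linear_combination hh),
        fun hh => c1 (by linear_combination hh)⟩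
    · exact ⟨fun hh => c2 (by linear_combination hh),
        fun hh => c0 (by linear_combination hh),
        fun hh => c1 (by linear_combination hh)⟩

/-- A·B. -/
lemma L6x2 (hm : 6 ≤ m) (z w h : Fin 3) (l q qq : ZMod m)
    (e2 : qq = q + 1) (hzw : z ≠ w) :
    (V K m z l * V K m w l) * (V K m h q * V K m h qq) ∈ Jabc K m := by
  subst e2
  by_cases c2 : q = l - 2
  · subst c2
    rw [show l - 2 + 1 = l - 1 from by ring]
    by_cases hwh : w = h
    · rw [hwh]
      refine Jeq (show _ = (V K m h l * V K m h (l-2)) * (V K m h (l-1) * V K m z l)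
        from by ring) ?_
      refine L2 hm h h h z l (l-2) (l-1) l (by ring) (fun hh => hzw (hh.symm.trans hwh.symm)) ?_
      exact far_of_neg hm 2 (by norm_num) (by norm_num) (by push_cast; ring)
    · refine Jeq (show _ = (V K m z l * V K m h (l-2)) * (V K m h (l-1) * V K m w l)
        from by ring) ?_
      refine L2 hm z h h w l (l-2) (l-1) l (by ring) (Ne.symm hwh) ?_
      exact far_of_neg hm 2 (by norm_num) (by norm_num) (by push_cast; ring)
  by_cases c1 : q = l - 1
  · subst c1
    rw [show l - 1 + 1 = l from by ring]
    by_cases hwh : w = h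
    · rw [hwh]
      refine Jeq (show _ = (V K m h (l-1) * V K m z l) * (V K m h l)^2 from by ring) ?_
      exact L5c hm h z h (l-1) l l (by ring) (fun hh => hzw (hh.symm.trans hwh.symm))
    by_cases hzh : z = h
    · rw [hzh]
      refine Jeq (show _ = (V K m h (l-1) * V K m w l) * (V K m h l)^2 from by ring) ?_
      exact L5c hm h w h (l-1) l l (by ring) (Ne.symm hwh)
    · refine Jeq (show _ = (V K m h (l-1) * V K m z l) * (V K m w l * V K m h l)
        from by ring) ?_
      exact L5a hm h z w h (l-1) l l (by ring) (Ne.symm hzh) hwh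
  by_cases c0 : q = l
  · subst c0
    by_cases hwh : w = h
    · rw [hwh]
      refine Jeq (show _ = (V K m z q * V K m h (q+1)) * (V K m h q)^2 from by ring) ?_
      exact L5c hm z h h q (q+1) q rfl (fun hh => hzw (hh.trans hwh.symm))
    by_cases hzh : z = h
    · rw [hzh]
      refine Jeq (show _ = (V K m w q * V K m h (q+1)) * (V K m h q)^2 from by ring) ?_
      exact L5c hm w h h q (q+1) q rfl (Ne.symm (fun hh => hwh hh.symm))
    · refine Jeq (show _ = (V K m z q * V K m h (q+1)) * (V K m w q * V K m h q)
        from by ring) ?_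
      exact L5a hm z h w h q (q+1) q rfl hzh hwh
  by_cases cp : q = l + 1
  · subst cp
    by_cases hwh : w = h
    · rw [hwh]
      refine Jeq (show _ = (V K m h l * V K m h (l+1+1)) * (V K m z l * V K m h (l+1))
        from by ring) ?_
      refine L2 hm h h z h l (l+1+1) l (l+1) rfl (fun hh => hzw (hh.trans hwh.symm)) ?_
      exact far_of hm 2 (by norm_num) (by norm_num) (by push_cast; ring)
    · refine Jeq (show _ = (V K m z l * V K m h (l+1+1)) * (V K m w l * V K m h (l+1))
        from by ring) ?_
      refine L2 hm z h w h l (l+1+1) l (l+1) rfl hwh ?_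
      exact far_of hm 2 (by norm_num) (by norm_num) (by push_cast; ring)
  · refine Jeq (show _ = (V K m z l * V K m h q) * (V K m w l * V K m h (q+1))
      from by ring) (I2J (memI1 z h ?_) (memI1 w h ?_))
    · exact ⟨fun hh => c1 (by linear_combination hh),
        fun hh => c0 (by linear_combination hh),
        fun hh => cp (by linear_combination hh)⟩
    · exact ⟨fun hh => c2 (by linear_combination hh),
        fun hh => c1 (by linear_combination hh),
        fun hh => c0 (by linear_combination hh)⟩

/-- Sq·B. -/
lemma L6x3 (hm : 6 ≤ m) (g h : Fin 3) (p q qq : ZMod m) (e2 : qq = q + 1) :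
    (V K m g p)^2 * (V K m h q * V K m h qq) ∈ Jabc K m := by
  subst e2
  by_cases c2 : q = p - 2
  · subst c2
    rw [show p - 2 + 1 = p - 1 from by ring]
    by_cases hgh : g = h
    · rw [hgh]
      refine Jeq (show _ = (V K m h (p-2) * V K m h p) * (V K m h (p-1) * V K m h p)
        from by ring) ?_
      refine L4sl hm h h h (p-2) p (p-1) p (by ring) ?_
      exact far_of hm 2 (by norm_num) (by norm_num) (by push_cast; ring)
    · refine Jeq (show _ = (V K m g p * V K m h (p-2)) * (V K m h (p-1) * V K m g p)
        from by ring) ?_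
      refine L2 hm g h h g p (p-2) (p-1) p (by ring) (Ne.symm hgh) ?_
      exact far_of_neg hm 2 (by norm_num) (by norm_num) (by push_cast; ring)
  by_cases c1 : q = p - 1
  · subst c1
    rw [show p - 1 + 1 = p from by ring]
    by_cases hgh : g = h
    · rw [hgh]
      exact Jeq (by ring) (TH6 hm h (p-1) p (by ring))
    · refine Jeq (show _ = (V K m h (p-1) * V K m g p) * (V K m h p * V K m g p)
        from by ring) ?_
      exact L5a hm h g h g (p-1) p p (by ring) (Ne.symm hgh) (Ne.symm hgh)
  by_cases c0 : q = p
  · subst c0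
    by_cases hgh : g = h
    · rw [hgh]
      exact Jeq (by ring) (TH5 hm h q (q+1) rfl)
    · refine Jeq (show _ = (V K m g q * V K m h (q+1)) * (V K m g q * V K m h q)
        from by ring) ?_
      exact L5a hm g h g h q (q+1) q rfl hgh hgh
  by_cases cp : q = p + 1
  · subst cp
    by_cases hgh : g = h
    · rw [hgh]
      refine Jeq (show _ = (V K m h p * V K m h (p+1+1)) * (V K m h p * V K m h (p+1))
        from by ring) ?_
      refine L4sl hm h h h p (p+1+1) p (p+1) rfl ?_
      exact far_of hm 2 (by norm_num) (by norm_num) (by push_cast; ring)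
    · refine Jeq (show _ = (V K m g p * V K m h (p+1+1)) * (V K m g p * V K m h (p+1))
        from by ring) ?_
      refine L2 hm g h g h p (p+1+1) p (p+1) rfl hgh ?_
      exact far_of hm 2 (by norm_num) (by norm_num) (by push_cast; ring)
  · refine Jeq (show _ = (V K m g p * V K m h q) * (V K m g p * V K m h (q+1))
      from by ring) (I2J (memI1 g h ?_) (memI1 g h ?_))
    · exact ⟨fun hh => c1 (by linear_combination hh),
        fun hh => c0 (by linear_combination hh),
        fun hh => cp (by linear_combination hh)⟩
    · exact ⟨fun hh => c2 (by linear_combination hh),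
        fun hh => c1 (by linear_combination hh),
        fun hh => c0 (by linear_combination hh)⟩

/-- generic C·C via T3 with canonical `P2` representatives. -/
lemma L6gen (hm : 6 ≤ m) (g1 g2 : Fin 3) (l1 l2 : ZMod m)
    (q1 q2 : MvPolynomial (Fin 3 × ZMod m) K)
    (hd1 : q1 - V K m g1 (l1-1) * V K m g1 l1 ∈ Iabc K m)
    (hd2 : q2 - V K m g2 (l2-1) * V K m g2 l2 ∈ Iabc K m)
    (ha : q1 * (V K m g2 (l2-1) * V K m g2 l2) ∈ Jabc K m)
    (hb : (V K m g1 (l1-1) * V K m g1 l1) * q2 ∈ Jabc K m) :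
    q1 * q2 ∈ Jabc K m := by
  refine T3 hd1 hd2 ha hb ?_
  exact L6x1 hm g1 g2 (l1-1) l1 (l2-1) l2 (by ring) (by ring)

end EGH

namespace EGH

variable {K : Type*} [Field K] {m : ℕ}

/-- second pair far. -/
lemma mainF (hm : 6 ≤ m) (x y z w : Fin 3) (i j l t : ZMod m) (hlt : Far m l t) :
    (V K m x i * V K m y j) * (V K m z l * V K m w t) ∈ Jabc K m := by
  by_cases hj0 : j = i
  · rw [hj0]
    by_cases hxy : x = y
    · rw [hxy]
      exact Jeq (by ring) (L4b hm z w y l t (i-1) i (by ring) hlt)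
    · exact Jeq (by ring) (L4a hm z w x y l t i hlt hxy)
  by_cases hjp : j = i + 1
  · by_cases hxy : x = y
    · rw [hxy]
      exact Jeq (by ring) (L4sl hm z w y l t i j hjp hlt)
    · exact Jeq (by ring) (L2 hm z w x y l t i j hjp hxy hlt)
  by_cases hjm : j = i - 1
  · by_cases hxy : x = y
    · rw [hxy]
      exact Jeq (by ring) (L4sl hm z w y l t j i (by rw [hjm]; ring) hlt)
    · exact Jeq (by ring) (L2 hm z w y x l t j i (by rw [hjm]; ring) (Ne.symm hxy) hlt)
  · exact I2J (memI1 x y ⟨hjm, hj0, hjp⟩) (memI1 z w hlt)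

/-- second pair cross. -/
lemma mainX (hm : 6 ≤ m) (x y u v : Fin 3) (i j s sp : ZMod m) (hsp : sp = s + 1)
    (huv : u ≠ v) :
    (V K m x i * V K m y j) * (V K m u s * V K m v sp) ∈ Jabc K m := by
  by_cases hj0 : j = i
  · rw [hj0]
    by_cases hxy : x = y
    · rw [hxy]
      exact Jeq (by ring) (L5c hm u v y s sp i hsp huv)
    · exact Jeq (by ring) (L5a hm u v x y s sp i hsp huv hxy)
  by_cases hjp : j = i + 1
  · by_cases hxy : x = y
    · rw [hxy]
      exact Jeq (by ring) (L5b hm u v y s sp i j hsp hjp huv)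
    · exact L3 hm x y u v i j s sp hjp hsp hxy huv
  by_cases hjm : j = i - 1
  · by_cases hxy : x = y
    · rw [hxy]
      exact Jeq (by ring) (L5b hm u v y s sp j i hsp (by rw [hjm]; ring) huv)
    · exact Jeq (by ring) (L3 hm y x u v j i s sp (by rw [hjm]; ring) hsp (Ne.symm hxy) huv)
  · exact L2 hm x y u v i j s sp hsp huv ⟨hjm, hj0, hjp⟩

/-- second pair same-index. -/
lemma mainA (hm : 6 ≤ m) (x y z w : Fin 3) (i j l : ZMod m) (hzw : z ≠ w) :
    (V K m x i * V K m y j) * (V K m z l * V K m w l) ∈ Jabc K m := by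
  by_cases hj0 : j = i
  · rw [hj0]
    by_cases hxy : x = y
    · rw [hxy]
      refine L6gen hm y (oth z w) (i-1) l _ _
        (Meq (by ring) (dSq y ((i-1)-1) (i-1) i (by ring) (by ring)))
        (memI4 (z := oth z w) hzw (Ne.symm (oth_ne1 hzw)) (Ne.symm (oth_ne2 hzw)) l) ?_ ?_
      · exact Jeq (by ring) (L6x3 hm y (oth z w) i (l-1) l (by ring))
      · exact Jeq (by ring) (L6x2 hm z w y l ((i-1)-1) (i-1) (by ring) hzw)
    · refine L6gen hm (oth x y) (oth z w) i l _ _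
        (memI4 (z := oth x y) hxy (Ne.symm (oth_ne1 hxy)) (Ne.symm (oth_ne2 hxy)) i)
        (memI4 (z := oth z w) hzw (Ne.symm (oth_ne1 hzw)) (Ne.symm (oth_ne2 hzw)) l) ?_ ?_
      · exact L6x2 hm x y (oth z w) i (l-1) l (by ring) hxy
      · exact Jeq (by ring) (L6x2 hm z w (oth x y) l (i-1) i (by ring) hzw)
  by_cases hjp : j = i + 1
  · by_cases hxy : x = y
    · rw [hxy]
      exact Jeq (by ring) (L6x2 hm z w y l i j hjp hzw)
    · exact L5a hm x y z w i j l hjp hxy hzw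
  by_cases hjm : j = i - 1
  · by_cases hxy : x = y
    · rw [hxy]
      exact Jeq (by ring) (L6x2 hm z w y l j i (by rw [hjm]; ring) hzw)
    · exact Jeq (by ring) (L5a hm y x z w j i l (by rw [hjm]; ring) (Ne.symm hxy) hzw)
  · exact L4a hm x y z w i j l ⟨hjm, hj0, hjp⟩ hzw

/-- second pair same-letter consecutive. -/
lemma mainB (hm : 6 ≤ m) (x y g : Fin 3) (i j p pp : ZMod m) (e : pp = p + 1) :
    (V K m x i * V K m y j) * (V K m g p * V K m g pp) ∈ Jabc K m := by
  by_cases hj0 : j = i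
  · rw [hj0]
    by_cases hxy : x = y
    · rw [hxy]
      exact Jeq (by ring) (L6x3 hm y g i p pp e)
    · exact L6x2 hm x y g i p pp e hxy
  by_cases hjp : j = i + 1
  · by_cases hxy : x = y
    · rw [hxy]
      exact L6x1 hm y g i j p pp hjp e
    · exact L5b hm x y g i j p pp hjp e hxy
  by_cases hjm : j = i - 1
  · by_cases hxy : x = y
    · rw [hxy]
      exact Jeq (by ring) (L6x1 hm y g j i p pp (by rw [hjm]; ring) e)
    · exact Jeq (by ring) (L5b hm y x g j i p pp (by rw [hjm]; ring) e (Ne.symm hxy))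
  · exact L4sl hm x y g i j p pp e ⟨hjm, hj0, hjp⟩

/-- second pair square. -/
lemma mainSq (hm : 6 ≤ m) (x y g : Fin 3) (i j p : ZMod m) :
    (V K m x i * V K m y j) * (V K m g p * V K m g p) ∈ Jabc K m := by
  by_cases hj0 : j = i
  · rw [hj0]
    by_cases hxy : x = y
    · rw [hxy]
      refine L6gen hm y g (i-1) (p-1) _ _
        (Meq (by ring) (dSq y ((i-1)-1) (i-1) i (by ring) (by ring)))
        (Meq (by ring) (dSq g ((p-1)-1) (p-1) p (by ring) (by ring))) ?_ ?_
      · exact Jeq (by ring) (L6x3 hm y g i ((p-1)-1) (p-1) (by ring))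
      · exact Jeq (by ring) (L6x3 hm g y p ((i-1)-1) (i-1) (by ring))
    · refine L6gen hm (oth x y) g i (p-1) _ _
        (memI4 (z := oth x y) hxy (Ne.symm (oth_ne1 hxy)) (Ne.symm (oth_ne2 hxy)) i)
        (Meq (by ring) (dSq g ((p-1)-1) (p-1) p (by ring) (by ring))) ?_ ?_
      · exact L6x2 hm x y g i ((p-1)-1) (p-1) (by ring) hxy
      · exact Jeq (by ring) (L6x3 hm g (oth x y) p (i-1) i (by ring))
  by_cases hjp : j = i + 1
  · by_cases hxy : x = y
    · rw [hxy]
      exact Jeq (by ring) (L6x3 hm g y p i j hjp)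
    · exact Jeq (by ring) (L5c hm x y g i j p hjp hxy)
  by_cases hjm : j = i - 1
  · by_cases hxy : x = y
    · rw [hxy]
      exact Jeq (by ring) (L6x3 hm g y p j i (by rw [hjm]; ring))
    · exact Jeq (by ring) (L5c hm y x g j i p (by rw [hjm]; ring) (Ne.symm hxy))
  · exact Jeq (by ring) (L4b hm x y g i j (p-1) p (by ring) ⟨hjm, hj0, hjp⟩)

/-- every product of four variables lies in `J`. -/
lemma quartic (hm : 6 ≤ m) (x y z w : Fin 3) (i j l t : ZMod m) :
    (V K m x i * V K m y j) * (V K m z l * V K m w t) ∈ Jabc K m := by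
  by_cases ht0 : t = l
  · rw [ht0]
    by_cases hzw : z = w
    · rw [hzw]
      exact mainSq hm x y w i j l
    · exact mainA hm x y z w i j l hzw
  by_cases htp : t = l + 1
  · by_cases hzw : z = w
    · rw [hzw]
      exact mainB hm x y w i j l t htp
    · exact mainX hm x y z w i j l t htp hzw
  by_cases htm : t = l - 1
  · by_cases hzw : z = w
    · rw [hzw]
      exact Jeq (by ring) (mainB hm x y w i j t l (by rw [htm]; ring))
    · exact Jeq (by ring) (mainX hm x y w z i j t l (by rw [htm]; ring) (Ne.symm hzw))
  · exact mainF hm x y z w i j l t ⟨htm, ht0, htp⟩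

end EGH



theorem mul_mem_J_of_mem_I (K : Type*) [Field K] (m : ℕ) (hm : 6 ≤ m)
    (x y z w : Fin 3) (i j l t : ZMod m) (h : V K m x i * V K m y j ∈ Iabc K m) :
    V K m x i * V K m y j * (V K m z l * V K m w t) ∈ Jabc K m := EGH.quartic hm x y z w i j l t
end

section
/- For all letters x,y ∈ {a,b,c} and all indices i,j (mod m), each of the degree-5 monomials x_i y_j a_j b_j c_j, x_i a_j b_j c_j d, and a_j b_j c_j d² lies in (I')². -/
open MvPolynomial

set_option maxHeartbeats 1000000

variable (K : Type*) [Field K]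

/-- The variable `x_i` (with `x ∈ {a,b,c}` encoded as `Fin 3`) in `S' = k[a_i,b_i,c_i,d]`. -/
noncomputable def V' (m : ℕ) (x : Fin 3) (i : ZMod m) :
    MvPolynomial ((Fin 3 × ZMod m) ⊕ Unit) K :=
  MvPolynomial.X (Sum.inl (x, i))

/-- The variable `d` of `S'`. -/
noncomputable def Dv (m : ℕ) : MvPolynomial ((Fin 3 × ZMod m) ⊕ Unit) K :=
  MvPolynomial.X (Sum.inr ())

/-- The generators of the ideal `I'`. -/
noncomputable def IdGens (m : ℕ) : Set (MvPolynomial ((Fin 3 × ZMod m) ⊕ Unit) K) :=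
  {p | ∃ (x y : Fin 3) (i j : ZMod m),
      j ≠ i - 1 ∧ j ≠ i ∧ j ≠ i + 1 ∧ p = V' K m x i * V' K m y j} ∪
  {p | ∃ (x y : Fin 3) (i j : ZMod m), x ≠ y ∧
      p = V' K m x i * V' K m y (i + 1) - V' K m x j * V' K m y (j + 1)} ∪
  {p | ∃ (x y z : Fin 3) (i : ZMod m), x ≠ y ∧ x ≠ z ∧ y ≠ z ∧
      p = V' K m x i ^ 2 - V' K m y (i - 1) * V' K m z (i - 1)} ∪
  {p | ∃ (x y z : Fin 3) (i : ZMod m), x ≠ y ∧ x ≠ z ∧ y ≠ z ∧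
      p = V' K m x i * V' K m y i - V' K m z (i - 1) * V' K m z i} ∪
  {p | ∃ i : ZMod m, p = V' K m 2 i * Dv K m} ∪ {Dv K m ^ 2} ∪
  {p | ∃ i : ZMod m, p = V' K m 0 i * Dv K m - V' K m 0 (i + 1) * V' K m 2 (i + 1)} ∪
  {p | ∃ i : ZMod m, p = V' K m 1 i * Dv K m - V' K m 1 (i - 1) * V' K m 2 (i - 1)}

/-- The ideal `I'`. -/
noncomputable def Id' (m : ℕ) : Ideal (MvPolynomial ((Fin 3 × ZMod m) ⊕ Unit) K) :=
  Ideal.span (IdGens K m)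

/-- The ideal `J' = I'² + (a_i a_{i+1} a_{i+2}², b_i b_{i+1} b_{i+2}², c_i c_{i+1} c_{i+2}²)
  + (a_1 b_1 c_1 d)`. -/
noncomputable def Jd (m : ℕ) : Ideal (MvPolynomial ((Fin 3 × ZMod m) ⊕ Unit) K) :=
  Id' K m ^ 2 ⊔
    Ideal.span ({p | ∃ (x : Fin 3) (i : ZMod m),
        p = V' K m x i * V' K m x (i + 1) * V' K m x (i + 2) ^ 2} ∪
      {V' K m 0 1 * V' K m 1 1 * V' K m 2 1 * Dv K m})

/-! ### Auxiliary lemmas -/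

private lemma fin3_cases (p q w x : Fin 3) (hpq : p ≠ q) (hpw : p ≠ w) (hqw : q ≠ w)
    (hxw : x ≠ w) : x = p ∨ x = q := by
  have h : ∀ p q w x : Fin 3, p ≠ q → p ≠ w → q ≠ w → x ≠ w → (x = p ∨ x = q) := by decide
  exact h p q w x hpq hpw hqw hxw

private lemma nzN {m : ℕ} (hm : 6 ≤ m) (k : ℕ) (h0 : 0 < k) (h6 : k < 6) :
    ((k : ℕ) : ZMod m) ≠ 0 := by
  rw [Ne, ZMod.natCast_eq_zero_iff]
  intro hd
  have := Nat.le_of_dvd h0 hd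
  omega

private lemma nz1 {m : ℕ} (hm : 6 ≤ m) : (1 : ZMod m) ≠ 0 := by
  have := nzN hm 1 (by norm_num) (by norm_num); simpa using this
private lemma nz2 {m : ℕ} (hm : 6 ≤ m) : (2 : ZMod m) ≠ 0 := by
  have := nzN hm 2 (by norm_num) (by norm_num); simpa using this
private lemma nz3 {m : ℕ} (hm : 6 ≤ m) : (3 : ZMod m) ≠ 0 := by
  have := nzN hm 3 (by norm_num) (by norm_num); simpa using this
private lemma nz4 {m : ℕ} (hm : 6 ≤ m) : (4 : ZMod m) ≠ 0 := by
  have := nzN hm 4 (by norm_num) (by norm_num); simpa using this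
private lemma nz5 {m : ℕ} (hm : 6 ≤ m) : (5 : ZMod m) ≠ 0 := by
  have := nzN hm 5 (by norm_num) (by norm_num); simpa using this

private lemma sub_rev {R : Type*} [CommRing R] {I : Ideal R} {a b : R} (h : a - b ∈ I) :
    b - a ∈ I := by
  simpa using I.neg_mem h

/-! ### Membership of the generators -/

private lemma memG1 (m : ℕ) (x y : Fin 3) (i j : ZMod m)
    (h1 : j ≠ i - 1) (h2 : j ≠ i) (h3 : j ≠ i + 1) :
    V' K m x i * V' K m y j ∈ Id' K m := by
  apply Ideal.subset_span
  simp only [IdGens, Set.mem_union, Set.mem_setOf_eq, Set.mem_singleton_iff]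
  exact Or.inl (Or.inl (Or.inl (Or.inl (Or.inl (Or.inl (Or.inl ⟨x, y, i, j, h1, h2, h3, rfl⟩))))))

private lemma memG2 (m : ℕ) (x y : Fin 3) (hxy : x ≠ y) (a b c d : ZMod m)
    (hb : b = a + 1) (hd : d = c + 1) :
    V' K m x a * V' K m y b - V' K m x c * V' K m y d ∈ Id' K m := by
  subst hb; subst hd
  apply Ideal.subset_span
  simp only [IdGens, Set.mem_union, Set.mem_setOf_eq, Set.mem_singleton_iff]
  exact Or.inl (Or.inl (Or.inl (Or.inl (Or.inl (Or.inl (Or.inr ⟨x, y, a, c, hxy, rfl⟩))))))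

private lemma memG3 (m : ℕ) (x y z : Fin 3) (h1 : x ≠ y) (h2 : x ≠ z) (h3 : y ≠ z)
    (i i' : ZMod m) (h : i' = i - 1) :
    V' K m x i ^ 2 - V' K m y i' * V' K m z i' ∈ Id' K m := by
  subst h
  apply Ideal.subset_span
  simp only [IdGens, Set.mem_union, Set.mem_setOf_eq, Set.mem_singleton_iff]
  exact Or.inl (Or.inl (Or.inl (Or.inl (Or.inl (Or.inr ⟨x, y, z, i, h1, h2, h3, rfl⟩)))))

private lemma memG4 (m : ℕ) (x y z : Fin 3) (h1 : x ≠ y) (h2 : x ≠ z) (h3 : y ≠ z)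
    (i i' : ZMod m) (h : i' = i - 1) :
    V' K m x i * V' K m y i - V' K m z i' * V' K m z i ∈ Id' K m := by
  subst h
  apply Ideal.subset_span
  simp only [IdGens, Set.mem_union, Set.mem_setOf_eq, Set.mem_singleton_iff]
  exact Or.inl (Or.inl (Or.inl (Or.inl (Or.inr ⟨x, y, z, i, h1, h2, h3, rfl⟩))))

private lemma memG5 (m : ℕ) (i : ZMod m) : V' K m 2 i * Dv K m ∈ Id' K m := by
  apply Ideal.subset_span
  simp only [IdGens, Set.mem_union, Set.mem_setOf_eq, Set.mem_singleton_iff]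
  exact Or.inl (Or.inl (Or.inl (Or.inr ⟨i, rfl⟩)))

private lemma mul_mem_sq {m : ℕ} {f g : MvPolynomial ((Fin 3 × ZMod m) ⊕ Unit) K}
    (hf : f ∈ Id' K m) (hg : g ∈ Id' K m) : f * g ∈ Id' K m ^ 2 := by
  rw [pow_two]; exact Ideal.mul_mem_mul hf hg

/-! ### Cubic monomials in `I'` -/

private lemma lemCsq (m : ℕ) (hm : 6 ≤ m) (p q w : Fin 3)
    (hpq : p ≠ q) (hpw : p ≠ w) (hqw : q ≠ w) (j : ZMod m) :
    V' K m p j * (V' K m p j * V' K m q j) ∈ Id' K m := by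
  have e : V' K m p j * (V' K m p j * V' K m q j)
      = V' K m q j * (V' K m p j ^ 2 - V' K m q (j - 1) * V' K m w (j - 1))
      + V' K m q (j - 1) *
          (V' K m w (j - 1) * V' K m q j - V' K m w (j + 2) * V' K m q (j + 3))
      + V' K m q (j + 3) * (V' K m q (j - 1) * V' K m w (j + 2)) := by ring
  rw [e]
  refine Ideal.add_mem _ (Ideal.add_mem _ ?_ ?_) ?_
  · exact Ideal.mul_mem_left _ _ (memG3 K m p q w hpq hpw hqw j (j - 1) rfl)
  · exact Ideal.mul_mem_left _ _
      (memG2 K m w q hqw.symm (j - 1) j (j + 2) (j + 3) (by ring) (by ring))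
  · refine Ideal.mul_mem_left _ _ (memG1 K m q w (j - 1) (j + 2) ?_ ?_ ?_)
    · intro h; exact nz4 hm (by linear_combination h)
    · intro h; exact nz3 hm (by linear_combination h)
    · intro h; exact nz2 hm (by linear_combination h)

private lemma lemCup (m : ℕ) (hm : 6 ≤ m) (p q x : Fin 3) (hpx : p ≠ x) (j : ZMod m) :
    V' K m x (j + 1) * (V' K m p j * V' K m q j) ∈ Id' K m := by
  have e : V' K m x (j + 1) * (V' K m p j * V' K m q j)
      = V' K m q j * (V' K m p j * V' K m x (j + 1) - V' K m p (j + 2) * V' K m x (j + 3))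
      + V' K m x (j + 3) * (V' K m q j * V' K m p (j + 2)) := by ring
  rw [e]
  refine Ideal.add_mem _ ?_ ?_
  · exact Ideal.mul_mem_left _ _
      (memG2 K m p x hpx j (j + 1) (j + 2) (j + 3) (by ring) (by ring))
  · refine Ideal.mul_mem_left _ _ (memG1 K m q p j (j + 2) ?_ ?_ ?_)
    · intro h; exact nz3 hm (by linear_combination h)
    · intro h; exact nz2 hm (by linear_combination h)
    · intro h; exact nz1 hm (by linear_combination h)

private lemma lemCdown (m : ℕ) (hm : 6 ≤ m) (p q x : Fin 3) (hxp : x ≠ p) (i : ZMod m) :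
    V' K m x i * (V' K m p (i + 1) * V' K m q (i + 1)) ∈ Id' K m := by
  have e : V' K m x i * (V' K m p (i + 1) * V' K m q (i + 1))
      = V' K m q (i + 1) *
          (V' K m x i * V' K m p (i + 1) - V' K m x (i + 3) * V' K m p (i + 4))
      + V' K m p (i + 4) * (V' K m q (i + 1) * V' K m x (i + 3)) := by ring
  rw [e]
  refine Ideal.add_mem _ ?_ ?_
  · exact Ideal.mul_mem_left _ _
      (memG2 K m x p hxp i (i + 1) (i + 3) (i + 4) (by ring) (by ring))
  · refine Ideal.mul_mem_left _ _ (memG1 K m q x (i + 1) (i + 3) ?_ ?_ ?_)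
    · intro h; exact nz3 hm (by linear_combination h)
    · intro h; exact nz2 hm (by linear_combination h)
    · intro h; exact nz1 hm (by linear_combination h)

/-- The key cubic lemma: `x_i p_j q_j ∈ I'` unless `x_i p_j q_j = a_j b_j c_j`. -/
private lemma lemC (m : ℕ) (hm : 6 ≤ m) (p q w x : Fin 3)
    (hpq : p ≠ q) (hpw : p ≠ w) (hqw : q ≠ w) (i j : ZMod m)
    (hbad : ¬(x = w ∧ i = j)) :
    V' K m x i * (V' K m p j * V' K m q j) ∈ Id' K m := by
  by_cases h1 : i = j
  · rw [h1]
    have hxw : x ≠ w := fun h => hbad ⟨h, h1⟩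
    rcases fin3_cases p q w x hpq hpw hqw hxw with hx | hx
    · rw [hx]; exact lemCsq K m hm p q w hpq hpw hqw j
    · rw [hx]
      have h := lemCsq K m hm q p w hpq.symm hqw hpw j
      have e : V' K m q j * (V' K m p j * V' K m q j)
          = V' K m q j * (V' K m q j * V' K m p j) := by ring
      rw [e]; exact h
  · by_cases h2 : i = j + 1
    · rw [h2]
      by_cases hx : x = p
      · rw [hx]
        have h := lemCup K m hm q p p hpq.symm j
        have e : V' K m p (j + 1) * (V' K m p j * V' K m q j)
            = V' K m p (j + 1) * (V' K m q j * V' K m p j) := by ring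
        rw [e]; exact h
      · exact lemCup K m hm p q x (Ne.symm hx) j
    · by_cases h3 : j = i + 1
      · rw [h3]
        by_cases hx : x = p
        · rw [hx]
          have h := lemCdown K m hm q p p hpq i
          have e : V' K m p i * (V' K m p (i + 1) * V' K m q (i + 1))
              = V' K m p i * (V' K m q (i + 1) * V' K m p (i + 1)) := by ring
          rw [e]; exact h
        · exact lemCdown K m hm p q x hx i
      · have e : V' K m x i * (V' K m p j * V' K m q j)
            = V' K m q j * (V' K m x i * V' K m p j) := by ring
        rw [e]
        refine Ideal.mul_mem_left _ _ (memG1 K m x p i j ?_ ?_ ?_)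
        · intro h; exact h2 (by linear_combination -h)
        · intro h; exact h1 h.symm
        · exact h3

/-! ### The quartic `p_{u} q_{u} p_{u+1} q_{u+1}` lies in `I'²` -/

private lemma lemM (m : ℕ) (hm : 6 ≤ m) (p q : Fin 3) (hpq : p ≠ q)
    (u u' : ZMod m) (h : u' = u + 1) :
    V' K m p u * V' K m q u * (V' K m p u' * V' K m q u') ∈ Id' K m ^ 2 := by
  subst h
  have e : V' K m p u * V' K m q u * (V' K m p (u + 1) * V' K m q (u + 1))
      = (V' K m q u * V' K m p (u + 1) - V' K m q (u + 2) * V' K m p (u + 3)) *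
          (V' K m p u * V' K m q (u + 1) - V' K m p (u + 4) * V' K m q (u + 5))
      + (V' K m q (u + 2) * V' K m p u) * (V' K m p (u + 3) * V' K m q (u + 1))
      + (V' K m q u * V' K m p (u + 4)) * (V' K m p (u + 1) * V' K m q (u + 5))
      - (V' K m q (u + 2) * V' K m p (u + 4)) * (V' K m p (u + 3) * V' K m q (u + 5)) := by
    ring
  rw [e]
  refine Ideal.sub_mem _ (Ideal.add_mem _ (Ideal.add_mem _ ?_ ?_) ?_) ?_
  · exact mul_mem_sq K
      (memG2 K m q p hpq.symm u (u + 1) (u + 2) (u + 3) (by ring) (by ring))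
      (memG2 K m p q hpq u (u + 1) (u + 4) (u + 5) (by ring) (by ring))
  · refine mul_mem_sq K (memG1 K m q p (u + 2) u ?_ ?_ ?_)
      (memG1 K m p q (u + 3) (u + 1) ?_ ?_ ?_)
    · intro h; exact nz1 hm (by linear_combination -h)
    · intro h; exact nz2 hm (by linear_combination -h)
    · intro h; exact nz3 hm (by linear_combination -h)
    · intro h; exact nz1 hm (by linear_combination -h)
    · intro h; exact nz2 hm (by linear_combination -h)
    · intro h; exact nz3 hm (by linear_combination -h)
  · refine mul_mem_sq K (memG1 K m q p u (u + 4) ?_ ?_ ?_)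
      (memG1 K m p q (u + 1) (u + 5) ?_ ?_ ?_)
    · intro h; exact nz5 hm (by linear_combination h)
    · intro h; exact nz4 hm (by linear_combination h)
    · intro h; exact nz3 hm (by linear_combination h)
    · intro h; exact nz5 hm (by linear_combination h)
    · intro h; exact nz4 hm (by linear_combination h)
    · intro h; exact nz3 hm (by linear_combination h)
  · refine mul_mem_sq K (memG1 K m q p (u + 2) (u + 4) ?_ ?_ ?_)
      (memG1 K m p q (u + 3) (u + 5) ?_ ?_ ?_)
    · intro h; exact nz3 hm (by linear_combination h)
    · intro h; exact nz2 hm (by linear_combination h)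
    · intro h; exact nz1 hm (by linear_combination h)
    · intro h; exact nz3 hm (by linear_combination h)
    · intro h; exact nz2 hm (by linear_combination h)
    · intro h; exact nz1 hm (by linear_combination h)

/-! ### The degree five monomial `x_i y_j a_j b_j c_j` lies in `I'²` -/

private lemma T1bad (m : ℕ) (hm : 6 ≤ m) (p q w : Fin 3)
    (hpq : p ≠ q) (hpw : p ≠ w) (hqw : q ≠ w) (j : ZMod m) :
    V' K m w j * V' K m w j * (V' K m p j * V' K m q j * V' K m w j) ∈ Id' K m ^ 2 := by
  have e : V' K m w j * V' K m w j * (V' K m p j * V' K m q j * V' K m w j)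
      = V' K m w j * ((V' K m w j ^ 2 - V' K m p (j - 1) * V' K m q (j - 1)) *
          (V' K m p j * V' K m q j - V' K m w (j + 1) ^ 2))
      + V' K m w j * (V' K m p (j - 1) * V' K m q (j - 1) * (V' K m p j * V' K m q j))
      + V' K m w (j + 1) * ((V' K m w j ^ 2 - V' K m p (j - 1) * V' K m q (j - 1)) *
          (V' K m w j * V' K m w (j + 1) - V' K m p (j + 1) * V' K m q (j + 1)))
      + V' K m w (j + 1) * ((V' K m w j ^ 2 - V' K m p (j - 1) * V' K m q (j - 1)) *
          (V' K m p (j + 1) * V' K m q (j + 1) - V' K m w (j + 2) ^ 2))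
      + V' K m w (j + 1) * ((V' K m w j * V' K m w (j + 2)) * (V' K m w j * V' K m w (j + 2)))
      - V' K m w (j + 1) * ((V' K m p (j - 1) * V' K m w (j + 2)) *
          (V' K m q (j - 1) * V' K m w (j + 2))) := by ring
  rw [e]
  have hg3 : V' K m w j ^ 2 - V' K m p (j - 1) * V' K m q (j - 1) ∈ Id' K m :=
    memG3 K m w p q hpw.symm hqw.symm hpq j (j - 1) rfl
  have hww : V' K m w j * V' K m w (j + 2) ∈ Id' K m := by
    refine memG1 K m w w j (j + 2) ?_ ?_ ?_
    · intro h; exact nz3 hm (by linear_combination h)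
    · intro h; exact nz2 hm (by linear_combination h)
    · intro h; exact nz1 hm (by linear_combination h)
  refine Ideal.sub_mem _
    (Ideal.add_mem _ (Ideal.add_mem _ (Ideal.add_mem _ (Ideal.add_mem _ ?_ ?_) ?_) ?_) ?_) ?_
  · refine Ideal.mul_mem_left _ _ (mul_mem_sq K hg3 (sub_rev ?_))
    exact memG3 K m w p q hpw.symm hqw.symm hpq (j + 1) j (by ring)
  · exact Ideal.mul_mem_left _ _ (lemM K m hm p q hpq (j - 1) j (by ring))
  · refine Ideal.mul_mem_left _ _ (mul_mem_sq K hg3 (sub_rev ?_))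
    exact memG4 K m p q w hpq hpw hqw (j + 1) j (by ring)
  · refine Ideal.mul_mem_left _ _ (mul_mem_sq K hg3 (sub_rev ?_))
    exact memG3 K m w p q hpw.symm hqw.symm hpq (j + 2) (j + 1) (by ring)
  · exact Ideal.mul_mem_left _ _ (mul_mem_sq K hww hww)
  · refine Ideal.mul_mem_left _ _ (mul_mem_sq K
      (memG1 K m p w (j - 1) (j + 2) ?_ ?_ ?_) (memG1 K m q w (j - 1) (j + 2) ?_ ?_ ?_))
    · intro h; exact nz4 hm (by linear_combination h)
    · intro h; exact nz3 hm (by linear_combination h)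
    · intro h; exact nz2 hm (by linear_combination h)
    · intro h; exact nz4 hm (by linear_combination h)
    · intro h; exact nz3 hm (by linear_combination h)
    · intro h; exact nz2 hm (by linear_combination h)

private lemma T1full (m : ℕ) (hm : 6 ≤ m) (p q w x : Fin 3)
    (hpq : p ≠ q) (hpw : p ≠ w) (hqw : q ≠ w) (i j : ZMod m)
    (A : MvPolynomial ((Fin 3 × ZMod m) ⊕ Unit) K)
    (hA : A = V' K m p j * V' K m q j * V' K m w j) :
    V' K m x i * V' K m w j * A ∈ Id' K m ^ 2 := by
  subst hA
  by_cases hb : x = w ∧ i = j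
  · rw [hb.1, hb.2]
    exact T1bad K m hm p q w hpq hpw hqw j
  · have hC : V' K m x i * (V' K m p j * V' K m q j) ∈ Id' K m :=
      lemC K m hm p q w x hpq hpw hqw i j hb
    have e : V' K m x i * V' K m w j * (V' K m p j * V' K m q j * V' K m w j)
        = (V' K m x i * (V' K m p j * V' K m q j)) *
            (V' K m w j ^ 2 - V' K m p (j - 1) * V' K m q (j - 1))
        + V' K m x i *
            (V' K m p (j - 1) * V' K m q (j - 1) * (V' K m p j * V' K m q j)) := by ring
    rw [e]
    refine Ideal.add_mem _ ?_ ?_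
    · exact mul_mem_sq K hC (memG3 K m w p q hpw.symm hqw.symm hpq j (j - 1) rfl)
    · exact Ideal.mul_mem_left _ _ (lemM K m hm p q hpq (j - 1) j (by ring))

theorem degree_five_mem_I'_sq (K : Type*) [Field K] (m : ℕ) (hm : 6 ≤ m)
    (x y : Fin 3) (i j : ZMod m) :
    V' K m x i * V' K m y j * (V' K m 0 j * V' K m 1 j * V' K m 2 j) ∈ Id' K m ^ 2 ∧
    V' K m x i * (V' K m 0 j * V' K m 1 j * V' K m 2 j) * Dv K m ∈ Id' K m ^ 2 ∧
    (V' K m 0 j * V' K m 1 j * V' K m 2 j) * Dv K m ^ 2 ∈ Id' K m ^ 2 := by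
  refine ⟨?_, ?_, ?_⟩
  · -- Target 1 : x_i y_j a_j b_j c_j ∈ I'²
    have hy : y = 0 ∨ y = 1 ∨ y = 2 := by
      have h : ∀ z : Fin 3, z = 0 ∨ z = 1 ∨ z = 2 := by decide
      exact h y
    rcases hy with rfl | rfl | rfl
    · exact T1full K m hm 1 2 0 x (by decide) (by decide) (by decide) i j _ (by ring)
    · exact T1full K m hm 0 2 1 x (by decide) (by decide) (by decide) i j _ (by ring)
    · exact T1full K m hm 0 1 2 x (by decide) (by decide) (by decide) i j _ (by ring)
  · -- Target 2 : x_i a_j b_j c_j d ∈ I'²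
    by_cases hb : x = 2 ∧ i = j
    · rw [hb.1, hb.2]
      -- the chain a_j b_j c_j ≡ c_{j+2} c_{j+3}² mod I'
      have hA : V' K m 0 j * V' K m 1 j * V' K m 2 j -
          V' K m 2 (j + 2) * V' K m 2 (j + 3) ^ 2 ∈ Id' K m := by
        have e : V' K m 0 j * V' K m 1 j * V' K m 2 j -
            V' K m 2 (j + 2) * V' K m 2 (j + 3) ^ 2
            = -(V' K m 2 j * (V' K m 2 (j + 1) ^ 2 - V' K m 0 j * V' K m 1 j))
            - V' K m 2 (j + 1) *
                (V' K m 0 (j + 1) * V' K m 1 (j + 1) - V' K m 2 j * V' K m 2 (j + 1))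
            - V' K m 2 (j + 1) *
                (V' K m 2 (j + 2) ^ 2 - V' K m 0 (j + 1) * V' K m 1 (j + 1))
            - V' K m 2 (j + 2) *
                (V' K m 0 (j + 2) * V' K m 1 (j + 2) - V' K m 2 (j + 1) * V' K m 2 (j + 2))
            - V' K m 2 (j + 2) *
                (V' K m 2 (j + 3) ^ 2 - V' K m 0 (j + 2) * V' K m 1 (j + 2)) := by ring
        rw [e]
        refine Ideal.sub_mem _ (Ideal.sub_mem _ (Ideal.sub_mem _ (Ideal.sub_mem _
          (neg_mem ?_) ?_) ?_) ?_) ?_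
        · exact Ideal.mul_mem_left _ _
            (memG3 K m 2 0 1 (by decide) (by decide) (by decide) (j + 1) j (by ring))
        · exact Ideal.mul_mem_left _ _
            (memG4 K m 0 1 2 (by decide) (by decide) (by decide) (j + 1) j (by ring))
        · exact Ideal.mul_mem_left _ _
            (memG3 K m 2 0 1 (by decide) (by decide) (by decide) (j + 2) (j + 1) (by ring))
        · exact Ideal.mul_mem_left _ _
            (memG4 K m 0 1 2 (by decide) (by decide) (by decide) (j + 2) (j + 1) (by ring))
        · exact Ideal.mul_mem_left _ _
            (memG3 K m 2 0 1 (by decide) (by decide) (by decide) (j + 3) (j + 2) (by ring))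
      have e2 : V' K m 2 j * (V' K m 0 j * V' K m 1 j * V' K m 2 j) * Dv K m
          = (V' K m 2 j * Dv K m) *
              (V' K m 0 j * V' K m 1 j * V' K m 2 j -
                V' K m 2 (j + 2) * V' K m 2 (j + 3) ^ 2)
          + V' K m 2 (j + 3) *
              ((V' K m 2 (j + 3) * Dv K m) * (V' K m 2 j * V' K m 2 (j + 2))) := by ring
      rw [e2]
      refine Ideal.add_mem _ ?_ ?_
      · exact mul_mem_sq K (memG5 K m j) hA
      · refine Ideal.mul_mem_left _ _ (mul_mem_sq K (memG5 K m (j + 3))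
          (memG1 K m 2 2 j (j + 2) ?_ ?_ ?_))
        · intro h; exact nz3 hm (by linear_combination h)
        · intro h; exact nz2 hm (by linear_combination h)
        · intro h; exact nz1 hm (by linear_combination h)
    · have hC : V' K m x i * (V' K m 0 j * V' K m 1 j) ∈ Id' K m :=
        lemC K m hm 0 1 2 x (by decide) (by decide) (by decide) i j hb
      have e : V' K m x i * (V' K m 0 j * V' K m 1 j * V' K m 2 j) * Dv K m
          = (V' K m x i * (V' K m 0 j * V' K m 1 j)) * (V' K m 2 j * Dv K m) := by ring
      rw [e]
      exact mul_mem_sq K hC (memG5 K m j)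
  · -- Target 3 : a_j b_j c_j d² ∈ I'²
    have hab : V' K m 0 j * V' K m 1 j * Dv K m ∈ Id' K m := by
      have e : V' K m 0 j * V' K m 1 j * Dv K m
          = -(Dv K m * (V' K m 2 (j + 1) ^ 2 - V' K m 0 j * V' K m 1 j))
          + V' K m 2 (j + 1) * (V' K m 2 (j + 1) * Dv K m) := by ring
      rw [e]
      refine Ideal.add_mem _ (neg_mem ?_) ?_
      · exact Ideal.mul_mem_left _ _
          (memG3 K m 2 0 1 (by decide) (by decide) (by decide) (j + 1) j (by ring))
      · exact Ideal.mul_mem_left _ _ (memG5 K m (j + 1))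
    have e : (V' K m 0 j * V' K m 1 j * V' K m 2 j) * Dv K m ^ 2
        = (V' K m 0 j * V' K m 1 j * Dv K m) * (V' K m 2 j * Dv K m) := by ring
    rw [e]
    exact mul_mem_sq K hab (memG5 K m j)
end
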